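/- arXiv:2011.06394 — 7 statements merged into one kernel-verified Lean document; each statement's English description precedes it below -/
import Mathlib

section
/- For all Pr > 0 and all X ∈ ℂ, the cubic P_Pr factors as P_Pr(X) = X·Q(X) + (3 i γ k a₁ / (2 Pr))·Q_T(X). -/
open Complex

/-- For all Pr > 0 and all X ∈ ℂ, the cubic P_Pr factors as
P_Pr(X) = X·Q(X) + (3 i γ k a₁ / (2 Pr))·Q_T(X). -/
theorem stmt_0 (ρ μ c k γ : ℝ) (hρ : 0 < ρ) (hμ : 0 < μ) (hc : 0 < c) (hk : 0 < k)
    (hγ : 1 < γ) (a₁ : ℝ) (ha₁ : a₁ = 2 * μ / (3 * ρ)) :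
    ∀ Pr : ℝ, 0 < Pr → ∀ X : ℂ,
      X ^ 3 + 2 * I * (k : ℂ) * (a₁ : ℂ) * (1 + 3 * (γ : ℂ) / (4 * (Pr : ℂ))) * X ^ 2
          - ((c : ℂ) ^ 2 + (3 * (γ : ℂ) / (Pr : ℂ)) * (a₁ : ℂ) ^ 2 * (k : ℂ) ^ 2) * X
          - (3 * I * (k : ℂ) * (a₁ : ℂ) * (c : ℂ) ^ 2) / (2 * (Pr : ℂ))
        = X * (X ^ 2 + 2 * I * (k : ℂ) * (a₁ : ℂ) * X - (c : ℂ) ^ 2)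
          + (3 * I * (γ : ℂ) * (k : ℂ) * (a₁ : ℂ) / (2 * (Pr : ℂ)))
            * (X ^ 2 + 2 * I * (k : ℂ) * (a₁ : ℂ) * X - (c : ℂ) ^ 2 / (γ : ℂ)) := by
  intro Pr hPr X
  have hP : (Pr : ℂ) ≠ 0 := by exact_mod_cast hPr.ne'
  have hγ0 : (γ : ℂ) ≠ 0 := by
    exact_mod_cast (lt_trans one_pos hγ).ne'
  have hI : I ^ 2 = -1 := I_sq
  field_simp
  ring_nf
  rw [I_sq]
  ring
end

section
/- Assume 0 < k a₁ < c. There exist Pr₀ > 0 and a function X⁰ : (Pr₀, ∞) → ℂ such that P_Pr(X⁰(Pr)) = 0 for all Pr > Pr₀ and, as Pr → ∞, X⁰(Pr) = −(3 i k a₁)/(2 Pr) + O(Pr⁻²). -/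
open Complex Filter Asymptotics

private lemma min_cube' {a b c m : ℝ} (hm : 0 ≤ m) (ha : m ≤ a) (hb : m ≤ b) (hc : m ≤ c) :
    m ^ 3 ≤ a * b * c := by
  have h1 : m * m ≤ a * b := mul_le_mul ha hb hm (le_trans hm ha)
  calc m ^ 3 = m * m * m := by ring
    _ ≤ a * b * c := mul_le_mul h1 hc hm (mul_nonneg (le_trans hm ha) (le_trans hm hb))

private lemma cubic_small_root (A B D : ℂ) :
    ∃ r : ℂ, r ^ 3 + A * r ^ 2 + B * r + D = 0 ∧ ‖r‖ ^ 3 ≤ ‖D‖ := by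
  classical
  set p : Polynomial ℂ := Polynomial.X ^ 3 + Polynomial.C A * Polynomial.X ^ 2
    + Polynomial.C B * Polynomial.X + Polynomial.C D with hp
  have hmonic : p.Monic := by unfold p; monicity!
  have hdeg : p.natDegree = 3 := by unfold p; compute_degree!
  have hsplit : p.Splits := IsAlgClosed.splits p
  have hcard : Multiset.card p.roots = 3 := by
    rw [(Polynomial.splits_iff_card_roots).mp hsplit, hdeg]
  obtain ⟨r₁, r₂, r₃, hr⟩ := Multiset.card_eq_three.mp hcard
  have hprod : p = ((p.roots).map fun a => Polynomial.X - Polynomial.C a).prod :=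
    hsplit.eq_prod_roots_of_monic hmonic
  have heval0 : D = -r₁ * (-r₂ * -r₃) := by
    have h0 := congrArg (Polynomial.eval 0) hprod
    rw [hr] at h0
    simpa [hp] using h0
  have hnD : ‖D‖ = ‖r₁‖ * ‖r₂‖ * ‖r₃‖ := by
    rw [heval0]; simp [norm_mul]; ring
  have hroot : ∀ x ∈ ({r₁, r₂, r₃} : Multiset ℂ), x ^ 3 + A * x ^ 2 + B * x + D = 0 := by
    intro x hx
    have : p.IsRoot x := Polynomial.isRoot_of_mem_roots (by rw [hr]; exact hx)
    simpa [hp, Polynomial.IsRoot] using this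
  have h1 : (0:ℝ) ≤ ‖r₁‖ := norm_nonneg _
  have h2 : (0:ℝ) ≤ ‖r₂‖ := norm_nonneg _
  have h3 : (0:ℝ) ≤ ‖r₃‖ := norm_nonneg _
  rcases le_total ‖r₁‖ ‖r₂‖ with h12 | h12 <;> rcases le_total ‖r₁‖ ‖r₃‖ with h13 | h13 <;>
    rcases le_total ‖r₂‖ ‖r₃‖ with h23 | h23
  · exact ⟨r₁, hroot r₁ (by simp), by rw [hnD]; exact min_cube' h1 le_rfl h12 h13⟩
  · exact ⟨r₁, hroot r₁ (by simp), by rw [hnD]; exact min_cube' h1 le_rfl h12 h13⟩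
  · exact ⟨r₁, hroot r₁ (by simp), by rw [hnD]; exact min_cube' h1 le_rfl h12 (le_trans h12 h23)⟩
  · exact ⟨r₃, hroot r₃ (by simp), by rw [hnD]; exact min_cube' h3 h13 h23 le_rfl⟩
  · exact ⟨r₂, hroot r₂ (by simp), by rw [hnD]; exact min_cube' h2 h12 le_rfl h23⟩
  · exact ⟨r₃, hroot r₃ (by simp), by rw [hnD]; exact min_cube' h3 (le_trans h23 h12) h23 le_rfl⟩
  · exact ⟨r₂, hroot r₂ (by simp), by rw [hnD]; exact min_cube' h2 h12 le_rfl h23⟩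
  · exact ⟨r₃, hroot r₃ (by simp), by rw [hnD]; exact min_cube' h3 h13 h23 le_rfl⟩

/-- The dispersion-relation cubic P_Pr. -/
noncomputable def P (k a₁ c γ Pr : ℝ) (X : ℂ) : ℂ :=
  X ^ 3 + 2 * I * (k : ℂ) * (a₁ : ℂ) * (1 + 3 * (γ : ℂ) / (4 * (Pr : ℂ))) * X ^ 2
    - ((c : ℂ) ^ 2 + (3 * (γ : ℂ) / (Pr : ℂ)) * (a₁ : ℂ) ^ 2 * (k : ℂ) ^ 2) * X
    - (3 * I * (k : ℂ) * (a₁ : ℂ) * (c : ℂ) ^ 2) / (2 * (Pr : ℂ))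

set_option maxHeartbeats 2000000 in
/-- Assume 0 < k a₁ < c. There exist Pr₀ > 0 and a function
X⁰ : (Pr₀, ∞) → ℂ such that P_Pr(X⁰(Pr)) = 0 for all Pr > Pr₀ and, as Pr → ∞,
X⁰(Pr) = −(3 i k a₁)/(2 Pr) + O(Pr⁻²). -/
theorem stmt_4 (ρ μ c k γ : ℝ) (hρ : 0 < ρ) (hμ : 0 < μ) (hc : 0 < c) (hk : 0 < k)
    (hγ : 1 < γ) (a₁ : ℝ) (ha₁ : a₁ = 2 * μ / (3 * ρ))
    (hka : 0 < k * a₁) (hlt : k * a₁ < c) :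
    ∃ Pr₀ : ℝ, 0 < Pr₀ ∧ ∃ X0 : ℝ → ℂ,
      (∀ Pr : ℝ, Pr₀ < Pr → P k a₁ c γ Pr (X0 Pr) = 0)
      ∧ (fun Pr : ℝ => X0 Pr - (-(3 * I * (k : ℂ) * (a₁ : ℂ)) / (2 * (Pr : ℂ))))
          =O[atTop] (fun Pr : ℝ => (Pr ^ 2)⁻¹) := by
  have ha₁pos : 0 < a₁ := by rw [ha₁]; positivity
  set δ : ℝ := min 1 (c ^ 2 / (2 * (1 + 2 * (k * a₁)))) with hδdef
  have hδpos : 0 < δ := lt_min one_pos (div_pos (by positivity) (by nlinarith))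
  have hδ1 : δ ≤ 1 := min_le_left _ _
  have hδ2 : δ * (1 + 2 * (k * a₁)) ≤ c ^ 2 / 2 := by
    have h := min_le_right 1 (c ^ 2 / (2 * (1 + 2 * (k * a₁))))
    rw [le_div_iff₀ (by nlinarith)] at h
    rw [← hδdef] at h
    linarith
  set C₁ : ℝ := 3 * (k * a₁) * (γ + 2) / 2 with hC₁def
  have hC₁pos : 0 < C₁ := by rw [hC₁def]; nlinarith
  set C₂ : ℝ := 3 * (k * a₁) * (γ - 1) * ((1 + 2 * (k * a₁)) * C₁) / c ^ 2 with hC₂def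
  set Pr₀ : ℝ := max (3 * (k * a₁) * c ^ 2 / (2 * δ ^ 3)) (max C₁ 1) with hPr₀def
  have hPr₀1 : 1 ≤ Pr₀ := (le_max_right C₁ 1).trans (le_max_right _ _)
  have claim : ∀ Pr : ℝ, Pr₀ < Pr → ∃ r : ℂ, P k a₁ c γ Pr r = 0 ∧
      ‖r - (-(3 * I * (k : ℂ) * (a₁ : ℂ)) / (2 * (Pr : ℂ)))‖ ≤ C₂ / Pr ^ 2 := by
    intro Pr hPr
    have hPr1 : 1 < Pr := lt_of_le_of_lt hPr₀1 hPr
    have hPrpos : (0:ℝ) < Pr := by linarith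
    have hPrC : (Pr : ℂ) ≠ 0 := by exact_mod_cast hPrpos.ne'
    obtain ⟨r, heq, hr3⟩ := cubic_small_root
      (2 * I * (k:ℂ) * (a₁:ℂ) * (1 + 3 * (γ:ℂ) / (4 * (Pr:ℂ))))
      (-((c : ℂ) ^ 2 + (3 * (γ : ℂ) / (Pr : ℂ)) * (a₁ : ℂ) ^ 2 * (k : ℂ) ^ 2))
      (-((3 * I * (k : ℂ) * (a₁ : ℂ) * (c : ℂ) ^ 2) / (2 * (Pr : ℂ))))
    have hP0 : P k a₁ c γ Pr r = 0 := by rw [P]; linear_combination heq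
    have hDnorm : ‖-((3 * I * (k:ℂ) * (a₁:ℂ) * (c:ℂ) ^ 2) / (2 * (Pr:ℂ)))‖
        = 3 * (k * a₁) * c ^ 2 / (2 * Pr) := by
      simp [norm_div, norm_mul, Complex.norm_I, map_mul, Complex.norm_real, Real.norm_eq_abs,
        abs_of_pos hk, abs_of_pos ha₁pos, abs_of_pos hPrpos, abs_of_pos hc, map_pow]
      ring
    have hDle : 3 * (k * a₁) * c ^ 2 / (2 * Pr) ≤ δ ^ 3 := by
      have h := (le_max_left (3 * (k * a₁) * c ^ 2 / (2 * δ ^ 3)) (max C₁ 1)).trans hPr.le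
      rw [div_le_iff₀ (by positivity)] at h
      rw [div_le_iff₀ (by positivity)]
      nlinarith [pow_pos hδpos 3]
    have hrδ : ‖r‖ ≤ δ := by
      refine le_of_pow_le_pow_left₀ (n := 3) (by norm_num) hδpos.le ?_
      rw [hDnorm] at hr3; linarith
    set q : ℂ := r ^ 2 + 2 * I * (k:ℂ) * (a₁:ℂ) * r with hqdef
    have hqnorm : ‖q‖ ≤ ‖r‖ * (‖r‖ + 2 * (k * a₁)) := by
      have hfac : q = r * (r + 2 * I * (k:ℂ) * (a₁:ℂ)) := by rw [hqdef]; ring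
      rw [hfac, norm_mul]
      refine mul_le_mul_of_nonneg_left ?_ (norm_nonneg r)
      calc ‖r + 2 * I * (k:ℂ) * (a₁:ℂ)‖ ≤ ‖r‖ + ‖2 * I * (k:ℂ) * (a₁:ℂ)‖ := norm_add_le _ _
        _ = ‖r‖ + 2 * (k * a₁) := by
            congr 1
            simp [norm_mul, Complex.norm_I, map_mul, Complex.norm_real, Real.norm_eq_abs,
              abs_of_pos hk, abs_of_pos ha₁pos]
            ring
    have hqhalf : ‖q‖ ≤ c ^ 2 / 2 := by
      have h1 : ‖r‖ * (‖r‖ + 2 * (k * a₁)) ≤ δ * (1 + 2 * (k * a₁)) := by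
        nlinarith [norm_nonneg r]
      linarith
    have hc2norm : ‖((c:ℂ) ^ 2)‖ = c ^ 2 := by
      rw [norm_pow, Complex.norm_real, Real.norm_eq_abs, abs_of_pos hc]
    have hden : c ^ 2 / 2 ≤ ‖q - (c:ℂ) ^ 2‖ := by
      have h2 := norm_sub_norm_le ((c:ℂ) ^ 2) q
      rw [norm_sub_rev, hc2norm] at h2
      linarith
    have hPident : P k a₁ c γ Pr r = r * (q - (c:ℂ) ^ 2)
        + (3 * I * (k:ℂ) * (a₁:ℂ) / (2 * (Pr:ℂ))) * ((γ:ℂ) * q - (c:ℂ) ^ 2) := by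
      rw [P, hqdef]
      field_simp
      linear_combination (-24 * r * (k:ℂ) ^ 2 * (a₁:ℂ) ^ 2 * (γ:ℂ)) * Complex.I_sq
    have key : r * (q - (c:ℂ) ^ 2)
        = -((3 * I * (k:ℂ) * (a₁:ℂ) / (2 * (Pr:ℂ))) * ((γ:ℂ) * q - (c:ℂ) ^ 2)) := by
      have h0 := hPident.symm.trans hP0
      linear_combination h0
    have hεnorm : ‖3 * I * (k:ℂ) * (a₁:ℂ) / (2 * (Pr:ℂ))‖ = 3 * (k * a₁) / (2 * Pr) := by
      simp [norm_div, norm_mul, Complex.norm_I, map_mul, Complex.norm_real, Real.norm_eq_abs,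
        abs_of_pos hk, abs_of_pos ha₁pos, abs_of_pos hPrpos]
      ring
    have hγnorm : ‖(γ:ℂ)‖ = γ := by
      rw [Complex.norm_real, Real.norm_eq_abs, abs_of_pos (by linarith : (0:ℝ) < γ)]
    have hγq : ‖(γ:ℂ) * q - (c:ℂ) ^ 2‖ ≤ γ * (c ^ 2 / 2) + c ^ 2 := by
      calc ‖(γ:ℂ) * q - (c:ℂ) ^ 2‖ ≤ ‖(γ:ℂ) * q‖ + ‖((c:ℂ) ^ 2)‖ := norm_sub_le _ _
        _ = γ * ‖q‖ + c ^ 2 := by rw [norm_mul, hγnorm, hc2norm]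
        _ ≤ γ * (c ^ 2 / 2) + c ^ 2 := by nlinarith [norm_nonneg q]
    have hrkey : ‖r‖ * ‖q - (c:ℂ) ^ 2‖
        = (3 * (k * a₁) / (2 * Pr)) * ‖(γ:ℂ) * q - (c:ℂ) ^ 2‖ := by
      have h0 := congrArg norm key
      rwa [norm_mul, norm_neg, norm_mul, hεnorm] at h0
    have hrC₁ : ‖r‖ ≤ C₁ / Pr := by
      have s1 : ‖r‖ * (c ^ 2 / 2) ≤ ‖r‖ * ‖q - (c:ℂ) ^ 2‖ :=
        mul_le_mul_of_nonneg_left hden (norm_nonneg r)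
      have s2 : (3 * (k * a₁) / (2 * Pr)) * ‖(γ:ℂ) * q - (c:ℂ) ^ 2‖
          ≤ (3 * (k * a₁) / (2 * Pr)) * (γ * (c ^ 2 / 2) + c ^ 2) :=
        mul_le_mul_of_nonneg_left hγq (by positivity)
      have s3 : (3 * (k * a₁) / (2 * Pr)) * (γ * (c ^ 2 / 2) + c ^ 2)
          = (C₁ / Pr) * (c ^ 2 / 2) := by rw [hC₁def]; field_simp
      have s4 : ‖r‖ * (c ^ 2 / 2) ≤ (C₁ / Pr) * (c ^ 2 / 2) := by
        rw [← s3]; linarith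
      exact le_of_mul_le_mul_right s4 (by positivity)
    have hqC : ‖q‖ ≤ (1 + 2 * (k * a₁)) * (C₁ / Pr) := by
      have hr1 : ‖r‖ ≤ 1 := hrδ.trans hδ1
      have : ‖r‖ * (‖r‖ + 2 * (k * a₁)) ≤ (C₁ / Pr) * (1 + 2 * (k * a₁)) := by
        refine mul_le_mul hrC₁ (by linarith) (by positivity) ?_
        positivity
      linarith [hqnorm, this]
    have key2 : (r - (-(3 * I * (k:ℂ) * (a₁:ℂ)) / (2 * (Pr:ℂ)))) * (q - (c:ℂ) ^ 2)
        = -((3 * I * (k:ℂ) * (a₁:ℂ) / (2 * (Pr:ℂ))) * (((γ:ℂ) - 1) * q)) := by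
      linear_combination key
    have hγ1norm : ‖((γ:ℂ) - 1)‖ = γ - 1 := by
      rw [show (γ:ℂ) - 1 = ((γ - 1 : ℝ) : ℂ) by push_cast; ring]
      rw [Complex.norm_real, Real.norm_eq_abs, abs_of_pos (by linarith : (0:ℝ) < γ - 1)]
    have hfin : ‖r - (-(3 * I * (k:ℂ) * (a₁:ℂ)) / (2 * (Pr:ℂ)))‖ * ‖q - (c:ℂ) ^ 2‖
        = (3 * (k * a₁) / (2 * Pr)) * ((γ - 1) * ‖q‖) := by
      have h0 := congrArg norm key2
      rwa [norm_mul, norm_neg, norm_mul, norm_mul, hεnorm, hγ1norm] at h0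
    refine ⟨r, hP0, ?_⟩
    have s1 : ‖r - (-(3 * I * (k:ℂ) * (a₁:ℂ)) / (2 * (Pr:ℂ)))‖ * (c ^ 2 / 2)
        ≤ ‖r - (-(3 * I * (k:ℂ) * (a₁:ℂ)) / (2 * (Pr:ℂ)))‖ * ‖q - (c:ℂ) ^ 2‖ :=
      mul_le_mul_of_nonneg_left hden (norm_nonneg _)
    have s2 : (3 * (k * a₁) / (2 * Pr)) * ((γ - 1) * ‖q‖)
        ≤ (3 * (k * a₁) / (2 * Pr)) * ((γ - 1) * ((1 + 2 * (k * a₁)) * (C₁ / Pr))) := by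
      refine mul_le_mul_of_nonneg_left ?_ (by positivity)
      exact mul_le_mul_of_nonneg_left hqC (by linarith)
    have s3 : (3 * (k * a₁) / (2 * Pr)) * ((γ - 1) * ((1 + 2 * (k * a₁)) * (C₁ / Pr)))
        = (C₂ / Pr ^ 2) * (c ^ 2 / 2) := by rw [hC₂def]; field_simp
    have s4 : ‖r - (-(3 * I * (k:ℂ) * (a₁:ℂ)) / (2 * (Pr:ℂ)))‖ * (c ^ 2 / 2)
        ≤ (C₂ / Pr ^ 2) * (c ^ 2 / 2) := by rw [← s3]; linarith
    exact le_of_mul_le_mul_right s4 (by positivity)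
  refine ⟨Pr₀, by linarith, fun Pr => if h : Pr₀ < Pr then (claim Pr h).choose else 0,
    fun Pr hPr => ?_, ?_⟩
  · simp only [dif_pos hPr]
    exact (claim Pr hPr).choose_spec.1
  · rw [isBigO_iff]
    refine ⟨C₂, ?_⟩
    filter_upwards [eventually_gt_atTop Pr₀] with Pr hPr
    simp only [dif_pos hPr]
    have hPrpos : (0:ℝ) < Pr := lt_trans (by linarith) hPr
    have h2 := (claim Pr hPr).choose_spec.2
    rw [Real.norm_eq_abs, abs_of_pos (by positivity : (0:ℝ) < (Pr ^ 2)⁻¹)]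
    calc ‖(claim Pr hPr).choose - (-(3 * I * (k:ℂ) * (a₁:ℂ)) / (2 * (Pr:ℂ)))‖
        ≤ C₂ / Pr ^ 2 := h2
      _ = C₂ * (Pr ^ 2)⁻¹ := div_eq_mul_inv _ _
end

section
/- Assume 0 < k a₁ < c/√γ. There exist ε > 0 and functions ξ⁻, ξ⁰, ξ⁺ : (0, ε) → ℂ such that for every Pr ∈ (0, ε) the values ξ⁻(Pr), ξ⁰(Pr), ξ⁺(Pr) are roots of P_Pr, and as Pr → 0⁺: ξ^∓(Pr) → −i k a₁ ∓ c_T(k), while Pr·ξ⁰(Pr) → −(3/2) i k a₁ γ (equivalently, ξ⁰(Pr) ∼ −3 i k a₁ γ/(2 Pr)). -/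
open Complex Filter

/-! With `c_T² = c²/γ - k²a₁²`,
`P_Pr(X) = X ((X + i k a₁)² + k²a₁² - c²) + (3 i k a₁ γ / (2 Pr)) ((X + i k a₁)² - c_T²)`,
so at `L = -i k a₁ ± c_T` the value `P_Pr(L) = L (c²/γ - c²)` does not depend on `Pr`.
The roots sum to `-2 i k a₁ (1 + 3γ/(4 Pr))`, so one of them has size of order `1/Pr`; the
product of the distances from `L` to the other two is then `O(Pr)`, and one of them lies within
`O(√Pr)` of `L`. The third root is what remains of the sum of the roots. -/

open Topology

theorem Complex.exists_cubic_eq_mul_sub (σ p q : ℂ) :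
    ∃ s₁ s₂ s₃ : ℂ,
      (∀ X : ℂ, X ^ 3 - σ * X ^ 2 + p * X + q = (X - s₁) * (X - s₂) * (X - s₃)) ∧
        s₁ + s₂ + s₃ = σ := by
  obtain ⟨s₁, hs₁⟩ : ∃ z : ℂ, z ^ 3 - σ * z ^ 2 + p * z + q = 0 := by
    open Polynomial in
    have hdeg : (X ^ 3 - C σ * X ^ 2 + C p * X + C q).degree = 3 := by compute_degree!
    obtain ⟨z, hz⟩ := Complex.exists_root (by rw [hdeg]; norm_num)
    exact ⟨z, by simpa using hz⟩
  obtain ⟨w, hw⟩ := IsAlgClosed.exists_pow_nat_eq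
    ((σ - s₁) ^ 2 - 4 * (p - σ * s₁ + s₁ ^ 2)) two_pos
  exact ⟨s₁, (σ - s₁ + w) / 2, (σ - s₁ - w) / 2,
    fun X => by linear_combination hs₁ + (X - s₁) / 4 * hw, by ring⟩

theorem cubic_eval_sub_sub_eq_zero {K : Type*} [Field K] {σ p q r₁ r₂ : K}
    (h₁ : r₁ ^ 3 - σ * r₁ ^ 2 + p * r₁ + q = 0) (h₂ : r₂ ^ 3 - σ * r₂ ^ 2 + p * r₂ + q = 0)
    (hne : r₁ ≠ r₂) :
    (σ - r₁ - r₂) ^ 3 - σ * (σ - r₁ - r₂) ^ 2 + p * (σ - r₁ - r₂) + q = 0 := by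
  have hquot : r₁ ^ 2 + r₁ * r₂ + r₂ ^ 2 - σ * (r₁ + r₂) + p = 0 :=
    (mul_eq_zero.1 (by linear_combination h₁ - h₂ : (r₁ - r₂) * _ = 0)).resolve_left
      (sub_ne_zero.2 hne)
  linear_combination (σ - 2 * r₁ - r₂) * hquot + h₁

theorem exists_norm_sub_sq_mul_le_of_le_norm_sub {𝕜 : Type*} [NormedField 𝕜]
    {u v w L : 𝕜} {δ R : ℝ}
    (hprod : ‖(L - u) * (L - v) * (L - w)‖ ≤ R) (hw : δ ≤ ‖L - w‖) :
    ∃ r, (r = u ∨ r = v) ∧ ‖L - r‖ ^ 2 * δ ≤ R := by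
  rw [norm_mul, norm_mul] at hprod
  rcases lt_or_ge δ 0 with hδ | hδ
  · have : 0 ≤ ‖L - u‖ * ‖L - v‖ * ‖L - w‖ := by positivity
    exact ⟨u, Or.inl rfl, by nlinarith [sq_nonneg ‖L - u‖]⟩
  have key : ∀ a b : ℝ, 0 ≤ a → a ≤ b → a ^ 2 * δ ≤ a * b * ‖L - w‖ := fun a b ha hab => by
    nlinarith [mul_le_mul_of_nonneg_left hab ha, mul_le_mul_of_nonneg_left hw (mul_nonneg ha
      (ha.trans hab))]
  rcases le_total ‖L - u‖ ‖L - v‖ with h | h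
  · exact ⟨u, Or.inl rfl, (key _ _ (norm_nonneg _) h).trans hprod⟩
  · exact ⟨v, Or.inr rfl,
      (key _ _ (norm_nonneg _) h).trans (by linarith [mul_comm ‖L - u‖ ‖L - v‖])⟩

theorem exists_norm_sub_sq_mul_le_of_le_norm_add {𝕜 : Type*} [NormedField 𝕜]
    {s₁ s₂ s₃ L : 𝕜} {δ R : ℝ}
    (hprod : ‖(L - s₁) * (L - s₂) * (L - s₃)‖ ≤ R) (hsum : 3 * (‖L‖ + δ) ≤ ‖s₁ + s₂ + s₃‖) :
    ∃ r, (r = s₁ ∨ r = s₂ ∨ r = s₃) ∧ ‖L - r‖ ^ 2 * δ ≤ R := by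
  have hfar : ∀ s : 𝕜, ‖L‖ + δ ≤ ‖s‖ → δ ≤ ‖L - s‖ := fun s hs => by
    linarith [norm_sub_norm_le s L, norm_sub_rev s L]
  have htri := norm_add₃_le (a := s₁) (b := s₂) (c := s₃)
  by_cases h₃ : ‖L‖ + δ ≤ ‖s₃‖
  · obtain ⟨r, hr, hle⟩ := exists_norm_sub_sq_mul_le_of_le_norm_sub hprod (hfar _ h₃)
    exact ⟨r, by tauto, hle⟩
  by_cases h₂ : ‖L‖ + δ ≤ ‖s₂‖
  · obtain ⟨r, hr, hle⟩ := exists_norm_sub_sq_mul_le_of_le_norm_sub (u := s₁) (v := s₃) (R := R)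
      (by rwa [mul_right_comm] at hprod) (hfar _ h₂)
    exact ⟨r, by tauto, hle⟩
  · obtain ⟨r, hr, hle⟩ := exists_norm_sub_sq_mul_le_of_le_norm_sub (u := s₂) (v := s₃) (R := R)
      (by rwa [mul_comm (L - s₁), mul_right_comm] at hprod) (hfar s₁ (by linarith))
    exact ⟨r, by tauto, hle⟩

theorem tendsto_of_norm_sub_sq_mul_le {α E : Type*} [SeminormedAddCommGroup E] {l : Filter α}
    {f : α → E} {g : α → ℝ} {L : E} {R : ℝ} (hg : Tendsto g l atTop)
    (hf : ∀ᶠ x in l, ‖f x - L‖ ^ 2 * g x ≤ R) : Tendsto f l (𝓝 L) := by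
  have hbound : Tendsto (fun x => √(R / g x)) l (𝓝 0) := by
    simpa using (tendsto_const_nhds.div_atTop hg).sqrt
  refine tendsto_iff_norm_sub_tendsto_zero.2 (squeeze_zero' (.of_forall fun _ => norm_nonneg _)
    ?_ hbound)
  filter_upwards [hf, hg.eventually_gt_atTop 0] with x hfx hgx
  exact Real.le_sqrt_of_sq_le ((le_div_iff₀ hgx).2 hfx)

noncomputable def rootSum (k a₁ γ Pr : ℝ) : ℂ := -(2 * I * k * a₁ * (1 + 3 * γ / (4 * Pr)))

section
variable {k a₁ c γ : ℝ}

theorem P_eq_cubic (Pr : ℝ) (X : ℂ) :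
    P k a₁ c γ Pr X = X ^ 3 - rootSum k a₁ γ Pr * X ^ 2
      + -(c ^ 2 + 3 * γ / Pr * a₁ ^ 2 * k ^ 2) * X + -(3 * I * k * a₁ * c ^ 2 / (2 * Pr)) := by
  unfold P rootSum; ring

theorem P_eq_mul_add_mul (hγ : γ ≠ 0) (Pr : ℝ) (X : ℂ) :
    P k a₁ c γ Pr X = X * ((X + I * k * a₁) ^ 2 + k ^ 2 * a₁ ^ 2 - c ^ 2)
      + 3 * I * k * a₁ * γ / (2 * Pr) * ((X + I * k * a₁) ^ 2 - (c ^ 2 / γ - k ^ 2 * a₁ ^ 2)) := by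
  have hγ' : (γ : ℂ) ≠ 0 := by exact_mod_cast hγ
  unfold P
  linear_combination (-(k ^ 2 * a₁ ^ 2 * X) - 3 * γ * k ^ 2 * a₁ ^ 2 * X / Pr
      - 3 * I * k * a₁ * γ / (2 * Pr) * k ^ 2 * a₁ ^ 2) * I_sq
    + 3 * I * k * a₁ * c ^ 2 / (2 * Pr) * mul_inv_cancel₀ hγ'

theorem P_eq_of_sq_eq (hγ : γ ≠ 0) (Pr : ℝ) {L : ℂ}
    (hL : (L + I * k * a₁) ^ 2 = c ^ 2 / γ - k ^ 2 * a₁ ^ 2) :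
    P k a₁ c γ Pr L = L * (c ^ 2 / γ - c ^ 2) := by
  rw [P_eq_mul_add_mul hγ, hL]; ring

theorem tendsto_norm_rootSum (hka : 0 < k * a₁) (hγ : 0 < γ) :
    Tendsto (fun Pr => ‖rootSum k a₁ γ Pr‖) (𝓝[>] 0) atTop := by
  have hlim : Tendsto (fun Pr : ℝ => 2 * (k * a₁) + 3 / 2 * (k * a₁) * γ * Pr⁻¹) (𝓝[>] 0) atTop :=
    tendsto_atTop_add_const_left _ _ (tendsto_inv_nhdsGT_zero.const_mul_atTop (by positivity))
  refine hlim.congr' (eventually_mem_nhdsWithin.mono fun Pr (hPr : 0 < Pr) => ?_)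
  have : Pr ≠ 0 := hPr.ne'
  simp only [rootSum]
  rw [norm_neg, show 2 * I * k * a₁ * (1 + 3 * γ / (4 * Pr))
      = ((2 * (k * a₁) + 3 / 2 * (k * a₁) * γ * Pr⁻¹ : ℝ) : ℂ) * I by push_cast; field_simp; ring,
    norm_mul, norm_I, mul_one, norm_real, Real.norm_of_nonneg (by positivity)]

theorem tendsto_ofReal_nhdsGT_zero : Tendsto (fun x : ℝ => (x : ℂ)) (𝓝[>] 0) (𝓝 0) :=
  tendsto_nhdsWithin_of_tendsto_nhds (by simpa using continuous_ofReal.tendsto 0)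

theorem tendsto_mul_rootSum :
    Tendsto (fun Pr : ℝ => (Pr : ℂ) * rootSum k a₁ γ Pr) (𝓝[>] 0)
      (𝓝 (-(3 / 2 * I * k * a₁ * γ))) := by
  have hlim : Tendsto (fun Pr : ℝ => -(2 * I * k * a₁ * Pr) - 3 / 2 * I * k * a₁ * γ) (𝓝[>] 0)
      (𝓝 (-(3 / 2 * I * k * a₁ * γ))) := by
    simpa using (tendsto_ofReal_nhdsGT_zero.const_mul (2 * I * k * a₁)).neg.sub_const
      (3 / 2 * I * k * a₁ * γ)
  refine hlim.congr' (eventually_mem_nhdsWithin.mono fun Pr (hPr : 0 < Pr) => ?_)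
  have : (Pr : ℂ) ≠ 0 := by exact_mod_cast hPr.ne'
  simp only [rootSum]
  field_simp
  ring

theorem P_exists_root_near (hγ : γ ≠ 0) {L : ℂ}
    (hL : (L + I * k * a₁) ^ 2 = c ^ 2 / γ - k ^ 2 * a₁ ^ 2) (Pr : ℝ) :
    ∃ r, P k a₁ c γ Pr r = 0 ∧
      ‖r - L‖ ^ 2 * (‖rootSum k a₁ γ Pr‖ / 3 - ‖L‖) ≤ ‖L * (c ^ 2 / γ - c ^ 2)‖ := by
  obtain ⟨s₁, s₂, s₃, hfac, hsum⟩ := Complex.exists_cubic_eq_mul_sub (rootSum k a₁ γ Pr)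
    (-(c ^ 2 + 3 * γ / Pr * a₁ ^ 2 * k ^ 2)) (-(3 * I * k * a₁ * c ^ 2 / (2 * Pr)))
  have hP : ∀ X, P k a₁ c γ Pr X = (X - s₁) * (X - s₂) * (X - s₃) := fun X => by
    rw [P_eq_cubic, hfac]
  obtain ⟨r, hr, hle⟩ := exists_norm_sub_sq_mul_le_of_le_norm_add
    (le_of_eq (congrArg norm ((hP L).symm.trans (P_eq_of_sq_eq hγ Pr hL))))
    (δ := ‖rootSum k a₁ γ Pr‖ / 3 - ‖L‖) (by rw [hsum]; linarith)
  refine ⟨r, ?_, by rwa [norm_sub_rev]⟩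
  rw [hP]
  rcases hr with rfl | rfl | rfl <;> ring

theorem P_exists_root_tendsto (hka : 0 < k * a₁) (hγ : 0 < γ) {L : ℂ}
    (hL : (L + I * k * a₁) ^ 2 = c ^ 2 / γ - k ^ 2 * a₁ ^ 2) :
    ∃ ξ : ℝ → ℂ, (∀ Pr, P k a₁ c γ Pr (ξ Pr) = 0) ∧ Tendsto ξ (𝓝[>] 0) (𝓝 L) := by
  choose ξ hroot hnear using P_exists_root_near hγ.ne' hL
  refine ⟨ξ, hroot, tendsto_of_norm_sub_sq_mul_le ?_ (.of_forall hnear)⟩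
  simpa only [sub_eq_add_neg] using tendsto_atTop_add_const_right _ (-‖L‖)
    ((tendsto_norm_rootSum hka hγ).atTop_div_const three_pos)

end

theorem stmt_5_general (c k γ : ℝ)
    (hγ : 1 < γ) (a₁ : ℝ)
    (hka : 0 < k * a₁) (hlt : k * a₁ < c / Real.sqrt γ)
    (cT : ℝ) (hcT : cT = Real.sqrt (c ^ 2 / γ - k ^ 2 * a₁ ^ 2)) :
    ∃ ε : ℝ, 0 < ε ∧ ∃ ξm ξ0 ξp : ℝ → ℂ,
      (∀ Pr : ℝ, Pr ∈ Set.Ioo 0 ε →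
        P k a₁ c γ Pr (ξm Pr) = 0 ∧ P k a₁ c γ Pr (ξ0 Pr) = 0 ∧ P k a₁ c γ Pr (ξp Pr) = 0)
      ∧ Tendsto ξm (nhdsWithin 0 (Set.Ioi 0))
          (nhds (-(I * (k : ℂ) * (a₁ : ℂ)) - (cT : ℂ)))
      ∧ Tendsto ξp (nhdsWithin 0 (Set.Ioi 0))
          (nhds (-(I * (k : ℂ) * (a₁ : ℂ)) + (cT : ℂ)))
      ∧ Tendsto (fun Pr : ℝ => (Pr : ℂ) * ξ0 Pr) (nhdsWithin 0 (Set.Ioi 0))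
          (nhds (-(3 / 2 * I * (k : ℂ) * (a₁ : ℂ) * (γ : ℂ)))) := by
  have hγ₀ : 0 < γ := by linarith
  have hcT_pos : 0 < c ^ 2 / γ - k ^ 2 * a₁ ^ 2 := by
    have := pow_lt_pow_left₀ hlt hka.le two_ne_zero
    rw [div_pow, Real.sq_sqrt hγ₀.le] at this
    linarith
  have hcT_sq : (cT : ℂ) ^ 2 = c ^ 2 / γ - k ^ 2 * a₁ ^ 2 := by
    exact_mod_cast hcT ▸ Real.sq_sqrt hcT_pos.le
  obtain ⟨ξm, hξm, hξm_lim⟩ := P_exists_root_tendsto (c := c) hka hγ₀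
    (L := -(I * k * a₁) - cT) (by linear_combination hcT_sq)
  obtain ⟨ξp, hξp, hξp_lim⟩ := P_exists_root_tendsto (c := c) hka hγ₀
    (L := -(I * k * a₁) + cT) (by linear_combination hcT_sq)
  have hne : ∀ᶠ Pr in 𝓝[>] 0, ξm Pr - ξp Pr ≠ 0 := (hξm_lim.sub hξp_lim).eventually_ne <| by
    have : cT ≠ 0 := (hcT ▸ Real.sqrt_pos.2 hcT_pos).ne'
    rw [show -(I * k * a₁) - cT - (-(I * k * a₁) + cT) = -(2 * cT : ℂ) by ring]
    exact_mod_cast neg_ne_zero.2 (mul_ne_zero two_ne_zero this)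
  obtain ⟨ε, hε, hsub⟩ := mem_nhdsGT_iff_exists_Ioo_subset.1 hne
  refine ⟨ε, hε, ξm, fun Pr => rootSum k a₁ γ Pr - ξm Pr - ξp Pr, ξp,
    fun Pr hPr => ⟨hξm Pr, ?_, hξp Pr⟩, hξm_lim, hξp_lim, ?_⟩
  · have h₁ := hξm Pr
    have h₂ := hξp Pr
    rw [P_eq_cubic] at h₁ h₂ ⊢
    exact cubic_eval_sub_sub_eq_zero h₁ h₂ (sub_ne_zero.1 (hsub hPr))
  · simpa [mul_sub] using (tendsto_mul_rootSum.sub (tendsto_ofReal_nhdsGT_zero.mul hξm_lim)).sub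
      (tendsto_ofReal_nhdsGT_zero.mul hξp_lim)

/-- Assume 0 < k a₁ < c/√γ. There exist ε > 0 and functions
ξ⁻, ξ⁰, ξ⁺ : (0, ε) → ℂ which are roots of P_Pr such that, as Pr → 0⁺,
ξ^∓(Pr) → −i k a₁ ∓ c_T(k) and Pr·ξ⁰(Pr) → −(3/2) i k a₁ γ. -/
theorem stmt_5 (ρ μ c k γ : ℝ) (hρ : 0 < ρ) (hμ : 0 < μ) (hc : 0 < c) (hk : 0 < k)
    (hγ : 1 < γ) (a₁ : ℝ) (ha₁ : a₁ = 2 * μ / (3 * ρ))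
    (hka : 0 < k * a₁) (hlt : k * a₁ < c / Real.sqrt γ)
    (cT : ℝ) (hcT : cT = Real.sqrt (c ^ 2 / γ - k ^ 2 * a₁ ^ 2)) :
    ∃ ε : ℝ, 0 < ε ∧ ∃ ξm ξ0 ξp : ℝ → ℂ,
      (∀ Pr : ℝ, Pr ∈ Set.Ioo 0 ε →
        P k a₁ c γ Pr (ξm Pr) = 0 ∧ P k a₁ c γ Pr (ξ0 Pr) = 0 ∧ P k a₁ c γ Pr (ξp Pr) = 0)
      ∧ Tendsto ξm (nhdsWithin 0 (Set.Ioi 0))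
          (nhds (-(I * (k : ℂ) * (a₁ : ℂ)) - (cT : ℂ)))
      ∧ Tendsto ξp (nhdsWithin 0 (Set.Ioi 0))
          (nhds (-(I * (k : ℂ) * (a₁ : ℂ)) + (cT : ℂ)))
      ∧ Tendsto (fun Pr : ℝ => (Pr : ℂ) * ξ0 Pr) (nhdsWithin 0 (Set.Ioi 0))
          (nhds (-(3 / 2 * I * (k : ℂ) * (a₁ : ℂ) * (γ : ℂ)))) :=
  stmt_5_general c k γ hγ a₁ hka hlt cT hcT
end

section
/- There exist ε > 0 and functions X⁻, X⁰, X⁺ : (0, ε) → ℂ such that for every b ∈ (0, ε) the values X⁻(b), X⁰(b), X⁺(b) are roots of R_b, and as b → 0⁺: X^±(b) = ±c − i ((γ−1)/(2γ)) b + O(b²) and X⁰(b) = −(i/γ) b + O(b²). -/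
open Complex Filter Asymptotics

/-- The non-viscous dispersion cubic R_b(X) = X³ + i b X² − c² X − i b c²/γ. -/
noncomputable def R (c γ b : ℝ) (X : ℂ) : ℂ :=
  X ^ 3 + I * (b : ℂ) * X ^ 2 - (c : ℂ) ^ 2 * X - I * (b : ℂ) * (c : ℂ) ^ 2 / (γ : ℂ)

/-!
Each root A₀ ∈ {-c, 0, c} of R₀ is simple, and for a simple root the coefficient A₁ is forced by
requiring the first-order term of R_b(A₀ + A₁ b) to vanish; this gives the stated values of A₁,
and then R_b(A₀ + A₁ b) = O(b²) while R_b'(A₀ + A₁ b) → R₀'(A₀) ≠ 0. For any split polynomial p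
of degree n and any point z, the root r of p nearest to z satisfies |z - r| |p'(z)| ≤ n |p(z)|,
since p'(z) is a sum of n products each of which, multiplied by |z - r|, is at most |p(z)|.
So the root of R_b nearest to A₀ + A₁ b lies within O(b²) of it.
-/

open Polynomial Topology

namespace Polynomial

variable {K : Type*} [NormedField K]

theorem Splits.exists_mem_roots_norm_sub_mul_le {p : K[X]} (hp : p.Splits) (hdeg : 0 < p.natDegree)
    (x : K) : ∃ r ∈ p.roots, ‖x - r‖ * ‖p.derivative.eval x‖ ≤ p.natDegree * ‖p.eval x‖ := by
  classical
  have hcard := splits_iff_card_roots.mp hp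
  have hne : p.roots.toFinset.Nonempty := by
    rw [Multiset.toFinset_nonempty, ← Multiset.card_pos, hcard]
    exact hdeg
  obtain ⟨r, hr, hmin⟩ := p.roots.toFinset.exists_min_image (fun z => ‖x - z‖) hne
  refine ⟨r, Multiset.mem_toFinset.mp hr, ?_⟩
  set P := (p.roots.map (x - ·)).prod
  set Q := fun a => ((p.roots.erase a).map (x - ·)).prod
  have hterm : ∀ a ∈ p.roots, ‖x - r‖ * ‖Q a‖ ≤ ‖P‖ := fun a ha => by
    rw [show P = (x - a) * Q a from (Multiset.prod_map_erase ha).symm, norm_mul]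
    exact mul_le_mul_of_nonneg_right (hmin a (Multiset.mem_toFinset.mpr ha)) (norm_nonneg _)
  have hsum : ‖x - r‖ * ‖(p.roots.map Q).sum‖ ≤ p.natDegree * ‖P‖ :=
    calc ‖x - r‖ * ‖(p.roots.map Q).sum‖ ≤ ‖x - r‖ * (p.roots.map fun a => ‖Q a‖).sum := by
          gcongr
          exact (norm_multiset_sum_le _).trans_eq (by rw [Multiset.map_map]; rfl)
      _ = (p.roots.map fun a => ‖x - r‖ * ‖Q a‖).sum := Multiset.sum_map_mul_left.symm
      _ ≤ p.natDegree * ‖P‖ := by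
          refine (Multiset.sum_le_card_nsmul _ ‖P‖ ?_).trans_eq ?_
          · simpa only [Multiset.mem_map, forall_exists_index, and_imp, forall_apply_eq_imp_iff₂]
              using hterm
          · rw [Multiset.card_map, hcard, nsmul_eq_mul]
  rw [hp.eval_derivative, hp.eval_eq_prod_roots, norm_mul, norm_mul]
  have := mul_le_mul_of_nonneg_left hsum (norm_nonneg p.leadingCoeff)
  linarith

theorem exists_isRoot_sub_isBigO [IsAlgClosed K] {α : Type*} {l : Filter α}
    {p : α → K[X]} {n : ℕ} (hdeg : ∀ a, (p a).natDegree = n) (hn : n ≠ 0) {A : α → K}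
    {g : α → ℝ} (hE : (fun a => (p a).eval (A a)) =O[l] g) {D : K} (hD0 : D ≠ 0)
    (hD : Tendsto (fun a => (p a).derivative.eval (A a)) l (𝓝 D)) :
    ∃ X : α → K, (∀ a, (p a).IsRoot (X a)) ∧ (fun a => X a - A a) =O[l] g := by
  choose X hX hXA using fun a => (IsAlgClosed.splits (p a)).exists_mem_roots_norm_sub_mul_le
    (by rw [hdeg]; exact Nat.pos_of_ne_zero hn) (A a)
  refine ⟨X, fun a => isRoot_of_mem_roots (hX a), IsBigO.trans ?_ hE⟩
  have hD_pos : 0 < ‖D‖ := norm_pos_iff.mpr hD0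
  refine IsBigO.of_bound (2 * n / ‖D‖) ?_
  filter_upwards [hD.norm.eventually (lt_mem_nhds (half_lt_self hD_pos))] with a ha
  have h := hXA a
  rw [hdeg] at h
  rw [norm_sub_rev, div_mul_eq_mul_div, le_div_iff₀ hD_pos]
  nlinarith [norm_nonneg (A a - X a)]

end Polynomial

noncomputable def dispersionPoly (c γ b : ℝ) : ℂ[X] :=
  X ^ 3 + C (I * b) * X ^ 2 - C ((c : ℂ) ^ 2) * X - C (I * b * (c : ℂ) ^ 2 / γ)

section dispersionPoly

variable (c γ b : ℝ)

@[simp]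
theorem eval_dispersionPoly (z : ℂ) : (dispersionPoly c γ b).eval z = R c γ b z := by
  simp [dispersionPoly, R]

theorem eval_derivative_dispersionPoly (z : ℂ) :
    (dispersionPoly c γ b).derivative.eval z = 3 * z ^ 2 + 2 * I * b * z - (c : ℂ) ^ 2 := by
  simp [dispersionPoly, -map_pow]
  ring

theorem natDegree_dispersionPoly : (dispersionPoly c γ b).natDegree = 3 := by
  unfold dispersionPoly
  compute_degree!

end dispersionPoly

theorem R_add_mul (c γ b : ℝ) (A₀ A₁ : ℂ) :
    R c γ b (A₀ + A₁ * b) = (A₀ ^ 3 - (c : ℂ) ^ 2 * A₀)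
      + ((3 * A₀ ^ 2 - (c : ℂ) ^ 2) * A₁ + I * A₀ ^ 2 - I * (c : ℂ) ^ 2 / γ) * b
      + (3 * A₀ * A₁ ^ 2 + 2 * I * A₀ * A₁ + (A₁ ^ 3 + I * A₁ ^ 2) * b) * (b : ℂ) ^ 2 := by
  simp only [R]
  ring

theorem exists_root_R_sub_isBigO (c γ : ℝ) {A₀ A₁ : ℂ} (hroot : A₀ ^ 3 - (c : ℂ) ^ 2 * A₀ = 0)
    (hsimple : 3 * A₀ ^ 2 - (c : ℂ) ^ 2 ≠ 0)
    (hfirst : (3 * A₀ ^ 2 - (c : ℂ) ^ 2) * A₁ + I * A₀ ^ 2 - I * (c : ℂ) ^ 2 / γ = 0) :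
    ∃ X : ℝ → ℂ, (∀ b, R c γ b (X b) = 0) ∧
      (fun b : ℝ => X b - (A₀ + A₁ * b)) =O[𝓝 0] (fun b : ℝ => b ^ 2) := by
  have hE : (fun b : ℝ => R c γ b (A₀ + A₁ * b)) =O[𝓝 0] (fun b : ℝ => b ^ 2) := by
    simp only [R_add_mul, hroot, hfirst, zero_mul, zero_add]
    have hsq : (fun b : ℝ => (b : ℂ) ^ 2) =O[𝓝 0] (fun b : ℝ => b ^ 2) :=
      isBigO_of_le _ fun b => by simp
    have hbdd : (fun b : ℝ => 3 * A₀ * A₁ ^ 2 + 2 * I * A₀ * A₁ + (A₁ ^ 3 + I * A₁ ^ 2) * b)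
        =O[𝓝 0] (fun _ => (1 : ℝ)) :=
      ((by fun_prop : Continuous fun b : ℝ =>
        3 * A₀ * A₁ ^ 2 + 2 * I * A₀ * A₁ + (A₁ ^ 3 + I * A₁ ^ 2) * b).tendsto 0).isBigO_one ℝ
    simpa using hbdd.mul hsq
  have hD : Tendsto (fun b : ℝ => (dispersionPoly c γ b).derivative.eval (A₀ + A₁ * b)) (𝓝 0)
      (𝓝 (3 * A₀ ^ 2 - (c : ℂ) ^ 2)) := by
    simp only [eval_derivative_dispersionPoly]
    simpa using ((by fun_prop : Continuous fun b : ℝ =>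
      3 * (A₀ + A₁ * b) ^ 2 + 2 * I * b * (A₀ + A₁ * b) - (c : ℂ) ^ 2).tendsto 0)
  obtain ⟨X, hX, hXA⟩ := exists_isRoot_sub_isBigO (natDegree_dispersionPoly c γ) three_ne_zero
    (by simpa using hE) hsimple hD
  exact ⟨X, fun b => by simpa using hX b, hXA⟩

/-- There exist ε > 0 and functions X⁻, X⁰, X⁺ : (0, ε) → ℂ such that for
every b ∈ (0, ε) the values X⁻(b), X⁰(b), X⁺(b) are roots of R_b, and as b → 0⁺:
X^±(b) = ±c − i ((γ−1)/(2γ)) b + O(b²) and X⁰(b) = −(i/γ) b + O(b²). -/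
theorem stmt_8 (c γ : ℝ) (hc : 0 < c) (hγ : 1 < γ) :
    ∃ ε : ℝ, 0 < ε ∧ ∃ Xm X0 Xp : ℝ → ℂ,
      (∀ b : ℝ, b ∈ Set.Ioo 0 ε →
        R c γ b (Xm b) = 0 ∧ R c γ b (X0 b) = 0 ∧ R c γ b (Xp b) = 0)
      ∧ (fun b : ℝ => Xm b - (-(c : ℂ) - I * (((γ : ℂ) - 1) / (2 * (γ : ℂ))) * (b : ℂ)))
          =O[nhdsWithin 0 (Set.Ioi 0)] (fun b : ℝ => b ^ 2)
      ∧ (fun b : ℝ => Xp b - ((c : ℂ) - I * (((γ : ℂ) - 1) / (2 * (γ : ℂ))) * (b : ℂ)))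
          =O[nhdsWithin 0 (Set.Ioi 0)] (fun b : ℝ => b ^ 2)
      ∧ (fun b : ℝ => X0 b - (-(I / (γ : ℂ)) * (b : ℂ)))
          =O[nhdsWithin 0 (Set.Ioi 0)] (fun b : ℝ => b ^ 2) := by
  have hc0 : (c : ℂ) ≠ 0 := ofReal_ne_zero.mpr hc.ne'
  have hγ0 : (γ : ℂ) ≠ 0 := ofReal_ne_zero.mpr (by linarith)
  obtain ⟨Xm, hXm, hOm⟩ := exists_root_R_sub_isBigO c γ (A₀ := -c)
    (A₁ := -(I * (((γ : ℂ) - 1) / (2 * γ)))) (by ring) (by ring_nf; simpa using hc0)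
    (by field_simp; ring)
  obtain ⟨Xp, hXp, hOp⟩ := exists_root_R_sub_isBigO c γ (A₀ := c)
    (A₁ := -(I * (((γ : ℂ) - 1) / (2 * γ)))) (by ring) (by ring_nf; simpa using hc0)
    (by field_simp; ring)
  obtain ⟨X0, hX0, hO0⟩ := exists_root_R_sub_isBigO c γ (A₀ := 0) (A₁ := -(I / γ))
    (by ring) (by simpa using hc0) (by ring)
  refine ⟨1, one_pos, Xm, X0, Xp, fun b _ => ⟨hXm b, hX0 b, hXp b⟩, ?_, ?_, ?_⟩
  · convert hOm.mono nhdsWithin_le_nhds using 3; ring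
  · convert hOp.mono nhdsWithin_le_nhds using 3; ring
  · convert hO0.mono nhdsWithin_le_nhds using 3; ring
end

section
/- Let z₀ = (ρ₀, T₀) ∈ U with C_v(z₀) > 0 and ∂p/∂ρ(z₀) ≠ 0, and let δ : ℝ → U be differentiable at t₀ with δ(t₀) = z₀, with p∘δ constant on a neighborhood of t₀, and with the T-component of δ′(t₀) equal to 1. Then T₀·(s∘δ)′(t₀) = C_v(z₀) + T₀·(∂p/∂T(z₀))²/(ρ₀²·∂p/∂ρ(z₀)). Consequently, setting C_p = T₀·(s∘δ)′(t₀), c_T² = ∂p/∂ρ(z₀) and c² = c_T² + T₀·(∂p/∂T(z₀))²/(ρ₀²·C_v(z₀)), one has c²·C_v(z₀) = c_T²·C_p (i.e. c_T² = c²/γ with γ = C_p/C_v). -/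
open Filter

lemma clm_decomp (L : (ℝ × ℝ) →L[ℝ] ℝ) (v : ℝ × ℝ) :
    L v = v.1 * L (1, 0) + v.2 * L (0, 1) := by
  have hv : v = v.1 • ((1 : ℝ), (0 : ℝ)) + v.2 • ((0 : ℝ), (1 : ℝ)) := by
    ext <;> simp
  conv_lhs => rw [hv]
  rw [map_add, map_smul, map_smul, smul_eq_mul, smul_eq_mul]

set_option maxHeartbeats 1000000 in
theorem stmt_14 (U : Set (ℝ × ℝ)) (hU : IsOpen U)
    (hUpos : ∀ z ∈ U, 0 < z.1 ∧ 0 < z.2)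
    (e s p : ℝ × ℝ → ℝ)
    (he : ContDiffOn ℝ 2 e U) (hs : ContDiffOn ℝ 2 s U) (hp : ContDiffOn ℝ 2 p U)
    (gibbsT : ∀ z ∈ U, fderiv ℝ e z (0, 1) = z.2 * fderiv ℝ s z (0, 1))
    (gibbsρ : ∀ z ∈ U, fderiv ℝ e z (1, 0) = z.2 * fderiv ℝ s z (1, 0) + p z / z.1 ^ 2)
    (z₀ : ℝ × ℝ) (hz₀ : z₀ ∈ U) (hCv : 0 < fderiv ℝ e z₀ (0, 1))
    (hpρ : fderiv ℝ p z₀ (1, 0) ≠ 0)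
    (δ : ℝ → ℝ × ℝ) (hδ_range : ∀ t, δ t ∈ U) (t₀ : ℝ)
    (hδ_diff : DifferentiableAt ℝ δ t₀) (hδ_t₀ : δ t₀ = z₀)
    (hp_const : ∀ᶠ t in nhds t₀, p (δ t) = p (δ t₀))
    (hδ_T : (deriv δ t₀).2 = 1) :
    z₀.2 * deriv (fun t => s (δ t)) t₀
      = fderiv ℝ e z₀ (0, 1)
        + z₀.2 * (fderiv ℝ p z₀ (0, 1)) ^ 2 / (z₀.1 ^ 2 * fderiv ℝ p z₀ (1, 0))
    ∧ (fderiv ℝ p z₀ (1, 0)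
          + z₀.2 * (fderiv ℝ p z₀ (0, 1)) ^ 2 / (z₀.1 ^ 2 * fderiv ℝ e z₀ (0, 1)))
        * fderiv ℝ e z₀ (0, 1)
      = fderiv ℝ p z₀ (1, 0) * (z₀.2 * deriv (fun t => s (δ t)) t₀) := by
  have hmem : U ∈ nhds z₀ := hU.mem_nhds hz₀
  have heA : ContDiffAt ℝ 2 e z₀ := he.contDiffAt hmem
  have hsA : ContDiffAt ℝ 2 s z₀ := hs.contDiffAt hmem
  have hpA : ContDiffAt ℝ 2 p z₀ := hp.contDiffAt hmem
  have hds : DifferentiableAt ℝ s z₀ := hsA.differentiableAt two_ne_zero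
  have hdp : DifferentiableAt ℝ p z₀ := hpA.differentiableAt two_ne_zero
  have hde' : DifferentiableAt ℝ (fderiv ℝ e) z₀ :=
    (heA.fderiv_right (m := 1) (by norm_num)).differentiableAt one_ne_zero
  have hds' : DifferentiableAt ℝ (fderiv ℝ s) z₀ :=
    (hsA.fderiv_right (m := 1) (by norm_num)).differentiableAt one_ne_zero
  have hρ0 : z₀.1 ≠ 0 := (hUpos z₀ hz₀).1.ne'
  have hρ2 : z₀.1 ^ 2 ≠ 0 := pow_ne_zero _ hρ0
  set E2 := fderiv ℝ (fderiv ℝ e) z₀ with hE2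
  set S2 := fderiv ℝ (fderiv ℝ s) z₀ with hS2
  have h1e : HasFDerivAt (fun z => fderiv ℝ e z ((0:ℝ), (1:ℝ)))
      ((ContinuousLinearMap.apply ℝ ℝ (((0:ℝ), (1:ℝ)) : ℝ × ℝ)).comp E2) z₀ :=
    (ContinuousLinearMap.apply ℝ ℝ (((0:ℝ), (1:ℝ)) : ℝ × ℝ)).hasFDerivAt.comp z₀
      hde'.hasFDerivAt
  have h1e' : HasFDerivAt (fun z => fderiv ℝ e z ((1:ℝ), (0:ℝ)))
      ((ContinuousLinearMap.apply ℝ ℝ (((1:ℝ), (0:ℝ)) : ℝ × ℝ)).comp E2) z₀ :=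
    (ContinuousLinearMap.apply ℝ ℝ (((1:ℝ), (0:ℝ)) : ℝ × ℝ)).hasFDerivAt.comp z₀
      hde'.hasFDerivAt
  have h1s : HasFDerivAt (fun z => fderiv ℝ s z ((0:ℝ), (1:ℝ)))
      ((ContinuousLinearMap.apply ℝ ℝ (((0:ℝ), (1:ℝ)) : ℝ × ℝ)).comp S2) z₀ :=
    (ContinuousLinearMap.apply ℝ ℝ (((0:ℝ), (1:ℝ)) : ℝ × ℝ)).hasFDerivAt.comp z₀
      hds'.hasFDerivAt
  have h1s' : HasFDerivAt (fun z => fderiv ℝ s z ((1:ℝ), (0:ℝ)))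
      ((ContinuousLinearMap.apply ℝ ℝ (((1:ℝ), (0:ℝ)) : ℝ × ℝ)).comp S2) z₀ :=
    (ContinuousLinearMap.apply ℝ ℝ (((1:ℝ), (0:ℝ)) : ℝ × ℝ)).hasFDerivAt.comp z₀
      hds'.hasFDerivAt
  have hsnd : HasFDerivAt (fun z : ℝ × ℝ => z.2)
      (ContinuousLinearMap.snd ℝ ℝ ℝ) z₀ := hasFDerivAt_snd
  -- the Gibbs relation for T-derivatives, differentiated in direction (1,0)
  have hF : HasFDerivAt
      (fun z => fderiv ℝ e z ((0:ℝ), (1:ℝ)) - z.2 * fderiv ℝ s z ((0:ℝ), (1:ℝ)))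
      ((ContinuousLinearMap.apply ℝ ℝ (((0:ℝ), (1:ℝ)) : ℝ × ℝ)).comp E2 -
        (z₀.2 • ((ContinuousLinearMap.apply ℝ ℝ (((0:ℝ), (1:ℝ)) : ℝ × ℝ)).comp S2)
          + fderiv ℝ s z₀ ((0:ℝ), (1:ℝ)) • ContinuousLinearMap.snd ℝ ℝ ℝ)) z₀ :=
    h1e.sub (hsnd.mul h1s)
  have hF0 : (fun z => fderiv ℝ e z ((0:ℝ), (1:ℝ)) - z.2 * fderiv ℝ s z ((0:ℝ), (1:ℝ)))
      =ᶠ[nhds z₀] fun _ => (0:ℝ) := by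
    filter_upwards [hmem] with z hz
    rw [gibbsT z hz]; ring
  have hLF : ((ContinuousLinearMap.apply ℝ ℝ (((0:ℝ), (1:ℝ)) : ℝ × ℝ)).comp E2 -
        (z₀.2 • ((ContinuousLinearMap.apply ℝ ℝ (((0:ℝ), (1:ℝ)) : ℝ × ℝ)).comp S2)
          + fderiv ℝ s z₀ ((0:ℝ), (1:ℝ)) • ContinuousLinearMap.snd ℝ ℝ ℝ)) = 0 := by
    have h1 := hF.fderiv
    rw [hF0.fderiv_eq] at h1
    rw [← h1]
    simp
  have hmax1 : E2 (1, 0) (0, 1) = z₀.2 * S2 (1, 0) (0, 1) := by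
    have h := congrFun (congrArg DFunLike.coe hLF) (((1:ℝ), (0:ℝ)) : ℝ × ℝ)
    simp [ContinuousLinearMap.sub_apply, ContinuousLinearMap.add_apply,
      ContinuousLinearMap.smul_apply, ContinuousLinearMap.comp_apply] at h
    linarith
  -- derivative of p z / z.1 ^ 2
  have hsq : HasFDerivAt (fun z : ℝ × ℝ => z.1 ^ 2)
      ((2 * z₀.1) • ContinuousLinearMap.fst ℝ ℝ ℝ) z₀ := by
    have h := (hasFDerivAt_fst (p := z₀) (𝕜 := ℝ)).mul (hasFDerivAt_fst (p := z₀) (𝕜 := ℝ))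
    simpa [sq, two_mul, add_smul, Pi.mul_def] using h
  have hinv : HasFDerivAt (fun z : ℝ × ℝ => (z.1 ^ 2)⁻¹)
      (-((((z₀.1 ^ 2) ^ 2)⁻¹ * (2 * z₀.1)) • ContinuousLinearMap.fst ℝ ℝ ℝ)) z₀ := by
    have h := (hasDerivAt_inv hρ2).comp_hasFDerivAt z₀ hsq
    simpa [smul_smul, Function.comp_def] using h
  have hdiv : HasFDerivAt (fun z : ℝ × ℝ => p z / z.1 ^ 2)
      (p z₀ • (-((((z₀.1 ^ 2) ^ 2)⁻¹ * (2 * z₀.1)) • ContinuousLinearMap.fst ℝ ℝ ℝ))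
        + (z₀.1 ^ 2)⁻¹ • fderiv ℝ p z₀) z₀ := by
    have h := hdp.hasFDerivAt.mul hinv
    simpa [div_eq_mul_inv, Pi.mul_def] using h
  -- the Gibbs relation for ρ-derivatives, differentiated in direction (0,1)
  have hG : HasFDerivAt
      (fun z => fderiv ℝ e z ((1:ℝ), (0:ℝ))
        - (z.2 * fderiv ℝ s z ((1:ℝ), (0:ℝ)) + p z / z.1 ^ 2))
      ((ContinuousLinearMap.apply ℝ ℝ (((1:ℝ), (0:ℝ)) : ℝ × ℝ)).comp E2 -
        ((z₀.2 • ((ContinuousLinearMap.apply ℝ ℝ (((1:ℝ), (0:ℝ)) : ℝ × ℝ)).comp S2)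
          + fderiv ℝ s z₀ ((1:ℝ), (0:ℝ)) • ContinuousLinearMap.snd ℝ ℝ ℝ)
        + (p z₀ • (-((((z₀.1 ^ 2) ^ 2)⁻¹ * (2 * z₀.1)) • ContinuousLinearMap.fst ℝ ℝ ℝ))
          + (z₀.1 ^ 2)⁻¹ • fderiv ℝ p z₀))) z₀ :=
    h1e'.sub ((hsnd.mul h1s').add hdiv)
  have hG0 : (fun z => fderiv ℝ e z ((1:ℝ), (0:ℝ))
        - (z.2 * fderiv ℝ s z ((1:ℝ), (0:ℝ)) + p z / z.1 ^ 2))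
      =ᶠ[nhds z₀] fun _ => (0:ℝ) := by
    filter_upwards [hmem] with z hz
    rw [gibbsρ z hz]; ring
  have hLG : ((ContinuousLinearMap.apply ℝ ℝ (((1:ℝ), (0:ℝ)) : ℝ × ℝ)).comp E2 -
        ((z₀.2 • ((ContinuousLinearMap.apply ℝ ℝ (((1:ℝ), (0:ℝ)) : ℝ × ℝ)).comp S2)
          + fderiv ℝ s z₀ ((1:ℝ), (0:ℝ)) • ContinuousLinearMap.snd ℝ ℝ ℝ)
        + (p z₀ • (-((((z₀.1 ^ 2) ^ 2)⁻¹ * (2 * z₀.1)) • ContinuousLinearMap.fst ℝ ℝ ℝ))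
          + (z₀.1 ^ 2)⁻¹ • fderiv ℝ p z₀))) = 0 := by
    have h1 := hG.fderiv
    rw [hG0.fderiv_eq] at h1
    rw [← h1]
    simp
  have hmax2 : E2 (0, 1) (1, 0) = z₀.2 * S2 (0, 1) (1, 0)
      + fderiv ℝ s z₀ (1, 0) + (z₀.1 ^ 2)⁻¹ * fderiv ℝ p z₀ (0, 1) := by
    have h := congrFun (congrArg DFunLike.coe hLG) (((0:ℝ), (1:ℝ)) : ℝ × ℝ)
    simp [ContinuousLinearMap.sub_apply, ContinuousLinearMap.add_apply,
      ContinuousLinearMap.smul_apply, ContinuousLinearMap.comp_apply] at h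
    linarith
  -- symmetry of second derivatives
  have hsymE : E2 (1, 0) (0, 1) = E2 (0, 1) (1, 0) :=
    (heA.isSymmSndFDerivAt (by simp [minSmoothness_of_isRCLikeNormedField])).eq _ _
  have hsymS : S2 (1, 0) (0, 1) = S2 (0, 1) (1, 0) :=
    (hsA.isSymmSndFDerivAt (by simp [minSmoothness_of_isRCLikeNormedField])).eq _ _
  -- Maxwell relation
  have maxwell : fderiv ℝ s z₀ (1, 0) = - fderiv ℝ p z₀ (0, 1) / z₀.1 ^ 2 := by
    have h := hmax1
    rw [hsymE, hsymS, hmax2] at h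
    field_simp at h ⊢
    linarith
  -- chain rule
  have hδd := hδ_diff.hasDerivAt
  have hsz : HasFDerivAt s (fderiv ℝ s z₀) (δ t₀) := by rw [hδ_t₀]; exact hds.hasFDerivAt
  have hpz : HasFDerivAt p (fderiv ℝ p z₀) (δ t₀) := by rw [hδ_t₀]; exact hdp.hasFDerivAt
  have hcs : HasDerivAt (fun t => s (δ t)) (fderiv ℝ s z₀ (deriv δ t₀)) t₀ :=
    hsz.comp_hasDerivAt t₀ hδd
  have hcp : HasDerivAt (fun t => p (δ t)) (fderiv ℝ p z₀ (deriv δ t₀)) t₀ :=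
    hpz.comp_hasDerivAt t₀ hδd
  have hpzero : fderiv ℝ p z₀ (deriv δ t₀) = 0 := by
    have h2 : (fun t => p (δ t)) =ᶠ[nhds t₀] fun _ => p (δ t₀) := hp_const
    have h1 : deriv (fun t => p (δ t)) t₀ = 0 := by
      rw [h2.deriv_eq, deriv_const]
    rw [hcp.deriv] at h1
    exact h1
  have hsd : deriv (fun t => s (δ t)) t₀ = fderiv ℝ s z₀ (deriv δ t₀) := hcs.deriv
  have hbv : (deriv δ t₀).1 * fderiv ℝ p z₀ (1, 0) + fderiv ℝ p z₀ (0, 1) = 0 := by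
    have h := clm_decomp (fderiv ℝ p z₀) (deriv δ t₀)
    rw [hδ_T, hpzero] at h
    linarith
  have hv1 : (deriv δ t₀).1 = - fderiv ℝ p z₀ (0, 1) / fderiv ℝ p z₀ (1, 0) := by
    field_simp
    linarith
  have hgT : z₀.2 * fderiv ℝ s z₀ (0, 1) = fderiv ℝ e z₀ (0, 1) := (gibbsT z₀ hz₀).symm
  have key : z₀.2 * deriv (fun t => s (δ t)) t₀
      = fderiv ℝ e z₀ (0, 1)
        + z₀.2 * (fderiv ℝ p z₀ (0, 1)) ^ 2 / (z₀.1 ^ 2 * fderiv ℝ p z₀ (1, 0)) := by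
    rw [hsd, clm_decomp (fderiv ℝ s z₀) (deriv δ t₀), hδ_T, maxwell, hv1]
    field_simp
    linear_combination (fderiv ℝ p z₀ (1, 0) * z₀.1 ^ 2) * hgT
  refine ⟨key, ?_⟩
  rw [key]
  have hCv' : fderiv ℝ e z₀ (0, 1) ≠ 0 := hCv.ne'
  field_simp
end

section
/- Assume 0 < k a₁ < c. There exist Pr₀ > 0 and a function X⁺ : (Pr₀, ∞) → ℂ such that P_Pr(X⁺(Pr)) = 0 for all Pr > Pr₀ and, as Pr → ∞: Re X⁺(Pr) = c(k) + (3(γ−1) k² a₁²/(4 c(k))) · Pr⁻¹ + O(Pr⁻²) and Im X⁺(Pr) = −k a₁ (1 + 3(γ−1)/(4 Pr)) + O(Pr⁻²). (Thus for large Prandtl number the phase speed is, at leading order, the adiabatic value c(k) and the attenuation is the Stokes attenuation k a₁.) -/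
open Complex Filter Asymptotics
open NNReal


lemma cubic_small_root_s16 (a0 a1 a2 : ℂ) (m r : ℝ) (hm : 0 < m)
    (ha1 : m ≤ ‖a1‖) (ha0 : ‖a0‖ ≤ m * r / 2)
    (hK : 2 * ‖a2‖ * r + 3 * r ^ 2 ≤ m / 2) :
    ∃ w : ℂ, ‖w‖ ≤ r ∧ a0 + a1 * w + a2 * w ^ 2 + w ^ 3 = 0 := by
  have hr0 : 0 ≤ r := by nlinarith [norm_nonneg a0]
  have ha1' : a1 ≠ 0 := by
    intro h
    rw [h] at ha1
    simp at ha1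
    linarith
  set g : ℂ → ℂ := fun w => -(a0 + a2 * w ^ 2 + w ^ 3) / a1 with hg
  have hnum : ∀ w : ℂ, ‖w‖ ≤ r → ‖a0 + a2 * w ^ 2 + w ^ 3‖ ≤ m * r := by
    intro w hw
    have h1 : ‖a0 + a2 * w ^ 2 + w ^ 3‖ ≤ ‖a0‖ + ‖a2‖ * ‖w‖ ^ 2 + ‖w‖ ^ 3 := by
      calc ‖a0 + a2 * w ^ 2 + w ^ 3‖ ≤ ‖a0 + a2 * w ^ 2‖ + ‖w ^ 3‖ := norm_add_le _ _
        _ ≤ ‖a0‖ + ‖a2 * w ^ 2‖ + ‖w ^ 3‖ := by linarith [norm_add_le a0 (a2 * w ^ 2)]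
        _ = ‖a0‖ + ‖a2‖ * ‖w‖ ^ 2 + ‖w‖ ^ 3 := by rw [norm_mul, norm_pow, norm_pow]
    have hw0 : 0 ≤ ‖w‖ := norm_nonneg w
    have e1 : ‖a2‖ * ‖w‖ ^ 2 ≤ ‖a2‖ * r ^ 2 :=
      mul_le_mul_of_nonneg_left (pow_le_pow_left₀ hw0 hw 2) (norm_nonneg a2)
    have e2 : ‖w‖ ^ 3 ≤ r ^ 3 := pow_le_pow_left₀ hw0 hw 3
    nlinarith [norm_nonneg a2]
  have hgnorm : ∀ w : ℂ, ‖g w‖ = ‖a0 + a2 * w ^ 2 + w ^ 3‖ / ‖a1‖ := by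
    intro w
    rw [hg]
    simp only [norm_div, norm_neg]
  have hmaps : Set.MapsTo g (Metric.closedBall (0:ℂ) r) (Metric.closedBall (0:ℂ) r) := by
    intro w hw
    simp only [Metric.mem_closedBall, dist_zero_right] at hw ⊢
    rw [hgnorm]
    calc ‖a0 + a2 * w ^ 2 + w ^ 3‖ / ‖a1‖ ≤ (m * r) / m :=
          div_le_div₀ (mul_nonneg hm.le hr0) (hnum w hw) hm ha1
      _ = r := by field_simp
  have hlip : ∀ w₁ w₂ : ℂ, ‖w₁‖ ≤ r → ‖w₂‖ ≤ r →
      dist (g w₁) (g w₂) ≤ (1/2 : ℝ) * dist w₁ w₂ := by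
    intro w₁ w₂ h1 h2
    have key : g w₁ - g w₂ = -((a2 * (w₁ + w₂) + (w₁ ^ 2 + w₁ * w₂ + w₂ ^ 2)) * (w₁ - w₂)) / a1 := by
      rw [hg]
      field_simp
      ring
    rw [dist_eq_norm, dist_eq_norm, key]
    rw [norm_div, norm_neg, norm_mul]
    have hb : ‖a2 * (w₁ + w₂) + (w₁ ^ 2 + w₁ * w₂ + w₂ ^ 2)‖ ≤ 2 * ‖a2‖ * r + 3 * r ^ 2 := by
      have b1 : ‖a2 * (w₁ + w₂)‖ ≤ ‖a2‖ * (2 * r) := by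
        rw [norm_mul]
        have : ‖w₁ + w₂‖ ≤ 2 * r := by
          calc ‖w₁ + w₂‖ ≤ ‖w₁‖ + ‖w₂‖ := norm_add_le _ _
            _ ≤ 2 * r := by linarith
        exact mul_le_mul_of_nonneg_left this (norm_nonneg a2)
      have b2 : ‖w₁ ^ 2 + w₁ * w₂ + w₂ ^ 2‖ ≤ 3 * r ^ 2 := by
        have c1 : ‖w₁ ^ 2‖ ≤ r ^ 2 := by rw [norm_pow]; nlinarith [norm_nonneg w₁]
        have c2 : ‖w₂ ^ 2‖ ≤ r ^ 2 := by rw [norm_pow]; nlinarith [norm_nonneg w₂]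
        have c3 : ‖w₁ * w₂‖ ≤ r ^ 2 := by
          rw [norm_mul]
          nlinarith [norm_nonneg w₁, norm_nonneg w₂]
        calc ‖w₁ ^ 2 + w₁ * w₂ + w₂ ^ 2‖ ≤ ‖w₁ ^ 2 + w₁ * w₂‖ + ‖w₂ ^ 2‖ := norm_add_le _ _
          _ ≤ ‖w₁ ^ 2‖ + ‖w₁ * w₂‖ + ‖w₂ ^ 2‖ := by linarith [norm_add_le (w₁ ^ 2) (w₁ * w₂)]
          _ ≤ 3 * r ^ 2 := by linarith
      calc ‖a2 * (w₁ + w₂) + (w₁ ^ 2 + w₁ * w₂ + w₂ ^ 2)‖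
          ≤ ‖a2 * (w₁ + w₂)‖ + ‖w₁ ^ 2 + w₁ * w₂ + w₂ ^ 2‖ := norm_add_le _ _
        _ ≤ 2 * ‖a2‖ * r + 3 * r ^ 2 := by linarith
    have ha1pos : 0 < ‖a1‖ := lt_of_lt_of_le hm ha1
    have hw12 : 0 ≤ ‖w₁ - w₂‖ := norm_nonneg _
    rw [div_le_iff₀ ha1pos]
    calc ‖a2 * (w₁ + w₂) + (w₁ ^ 2 + w₁ * w₂ + w₂ ^ 2)‖ * ‖w₁ - w₂‖
        ≤ (m / 2) * ‖w₁ - w₂‖ := by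
          apply mul_le_mul_of_nonneg_right _ hw12
          linarith
      _ ≤ (1/2 * ‖w₁ - w₂‖) * ‖a1‖ := by nlinarith
  -- now apply the Banach fixed point theorem on the closed ball
  have hsc : IsComplete (Metric.closedBall (0:ℂ) r) :=
    Metric.isClosed_closedBall.isComplete
  have hcontr : ContractingWith (1/2 : ℝ≥0) (Set.MapsTo.restrict g (Metric.closedBall (0:ℂ) r) (Metric.closedBall (0:ℂ) r) hmaps) := by
    constructor
    · exact_mod_cast (by norm_num : (1:ℝ)/2 < 1)
    · apply LipschitzWith.of_dist_le_mul
      rintro ⟨x, hx⟩ ⟨y, hy⟩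
      simp only [Metric.mem_closedBall, dist_zero_right] at hx hy
      have := hlip x y hx hy
      simpa [Subtype.dist_eq] using this
  have h0mem : (0:ℂ) ∈ Metric.closedBall (0:ℂ) r := by simp [hr0]
  obtain ⟨y, hymem, hyfix, -, -⟩ :=
    hcontr.exists_fixedPoint' hsc hmaps h0mem (edist_ne_top _ _)
  refine ⟨y, ?_, ?_⟩
  · simpa [dist_zero_right] using Metric.mem_closedBall.1 hymem
  · have : -(a0 + a2 * y ^ 2 + y ^ 3) / a1 = y := hyfix
    field_simp at this
    linear_combination -this

noncomputable def Zf (ck k a₁ γ Pr : ℝ) : ℂ :=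
  ((ck + (3 * (γ - 1) * k ^ 2 * a₁ ^ 2 / (4 * ck)) / Pr : ℝ) : ℂ)
    + ((-(k * a₁) * (1 + 3 * (γ - 1) / (4 * Pr)) : ℝ) : ℂ) * I

noncomputable def A1f (ck k a₁ c γ Pr : ℝ) : ℂ :=
  3 * (Zf ck k a₁ γ Pr) ^ 2
    + 4 * I * (k:ℂ) * (a₁:ℂ) * (1 + 3 * (γ:ℂ) / (4 * (Pr:ℂ))) * Zf ck k a₁ γ Pr
    - ((c:ℂ) ^ 2 + (3 * (γ:ℂ) / (Pr:ℂ)) * (a₁:ℂ) ^ 2 * (k:ℂ) ^ 2)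

noncomputable def A2f (ck k a₁ γ Pr : ℝ) : ℂ :=
  3 * Zf ck k a₁ γ Pr + 2 * I * (k:ℂ) * (a₁:ℂ) * (1 + 3 * (γ:ℂ) / (4 * (Pr:ℂ)))

noncomputable def p2c (ck k a₁ γ : ℝ) : ℂ :=
  I*((k:ℂ)*(a₁:ℂ))^3*(-45/16 + 27/8*(γ:ℂ) - 9/16*(γ:ℂ)^2)
  + ((k:ℂ)*(a₁:ℂ))^4*((ck:ℂ))⁻¹*(9/16 - 9/8*(γ:ℂ) + 9/16*(γ:ℂ)^2)
  + I*((k:ℂ)*(a₁:ℂ))^5*(((ck:ℂ))⁻¹)^2*(-9/16 + 9/8*(γ:ℂ) - 9/16*(γ:ℂ)^2)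
  + (ck:ℂ)*((k:ℂ)*(a₁:ℂ))^2*(-27/16 + 9/8*(γ:ℂ) + 9/16*(γ:ℂ)^2)

noncomputable def p3c (ck k a₁ γ : ℝ) : ℂ :=
  I*((k:ℂ)*(a₁:ℂ))^3*(-27/64 + 27/64*(γ:ℂ) + 27/64*(γ:ℂ)^2 - 27/64*(γ:ℂ)^3)
  + ((k:ℂ)*(a₁:ℂ))^4*((ck:ℂ))⁻¹*(81/64 - 135/64*(γ:ℂ) + 27/64*(γ:ℂ)^2 + 27/64*(γ:ℂ)^3)
  + I*((k:ℂ)*(a₁:ℂ))^5*(((ck:ℂ))⁻¹)^2*(81/64 - 189/64*(γ:ℂ) + 135/64*(γ:ℂ)^2 - 27/64*(γ:ℂ)^3)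
  + ((k:ℂ)*(a₁:ℂ))^6*(((ck:ℂ))⁻¹)^3*(-27/64 + 81/64*(γ:ℂ) - 81/64*(γ:ℂ)^2 + 27/64*(γ:ℂ)^3)

lemma taylor_P (ck k a₁ c γ Pr : ℝ) (w : ℂ) :
    P k a₁ c γ Pr (Zf ck k a₁ γ Pr + w)
      = P k a₁ c γ Pr (Zf ck k a₁ γ Pr) + A1f ck k a₁ c γ Pr * w
        + A2f ck k a₁ γ Pr * w ^ 2 + w ^ 3 := by
  simp only [P, A1f, A2f]
  ring

lemma key_id (sc bb gc x u : ℂ) (hu : sc * u = 1) :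
    (sc + 3*(gc-1)*bb^2*u/4*x + -(bb*(1+3*(gc-1)/4*x))*I)^3
      + 2*I*bb*(1+3*gc/4*x) * (sc + 3*(gc-1)*bb^2*u/4*x + -(bb*(1+3*(gc-1)/4*x))*I)^2
      - ((sc^2+bb^2) + 3*gc*x*bb^2) * (sc + 3*(gc-1)*bb^2*u/4*x + -(bb*(1+3*(gc-1)/4*x))*I)
      - 3*I*bb*(sc^2+bb^2)/2*x
    = (I*bb^3*(-45/16 + 27/8*gc - 9/16*gc^2)
       + bb^4*u*(9/16 - 9/8*gc + 9/16*gc^2)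
       + I*bb^5*u^2*(-9/16 + 9/8*gc - 9/16*gc^2)
       + sc*bb^2*(-27/16 + 9/8*gc + 9/16*gc^2)
       + (I*bb^3*(-27/64 + 27/64*gc + 27/64*gc^2 - 27/64*gc^3)
          + bb^4*u*(81/64 - 135/64*gc + 27/64*gc^2 + 27/64*gc^3)
          + I*bb^5*u^2*(81/64 - 189/64*gc + 135/64*gc^2 - 27/64*gc^3)
          + bb^6*u^3*(-27/64 + 81/64*gc - 81/64*gc^2 + 27/64*gc^3)) * x) * x^2 := by
  have hI : I^2 = (-1 : ℂ) := Complex.I_sq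
  linear_combination ((3/2 : ℂ)*bb^3*x*I + (-27/8 : ℂ)*bb^3*x^2*I + (-3/2 : ℂ)*bb^3*gc*x*I + (9/2 : ℂ)*bb^3*gc*x^2*I + (-9/8 : ℂ)*bb^3*gc^2*x^2*I + (27/16 : ℂ)*bb^4*x^2*u + (-27/8 : ℂ)*bb^4*gc*x^2*u + (27/16 : ℂ)*bb^4*gc^2*x^2*u + (-3/2 : ℂ)*sc*bb^2*x + (3/2 : ℂ)*sc*bb^2*gc*x) * hu + (bb^3*I + (-3/4 : ℂ)*bb^3*x*I + (-9/16 : ℂ)*bb^3*x^2*I + (27/64 : ℂ)*bb^3*x^3*I + (9/4 : ℂ)*bb^3*gc*x*I + (-9/8 : ℂ)*bb^3*gc*x^2*I + (-27/64 : ℂ)*bb^3*gc*x^3*I + (27/16 : ℂ)*bb^3*gc^2*x^2*I + (-27/64 : ℂ)*bb^3*gc^2*x^3*I + (27/64 : ℂ)*bb^3*gc^3*x^3*I + (3/4 : ℂ)*bb^4*x*u + (9/8 : ℂ)*bb^4*x^2*u + (-81/64 : ℂ)*bb^4*x^3*u + (-3/4 : ℂ)*bb^4*gc*x*u + (135/64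 : ℂ)*bb^4*gc*x^3*u + (-9/8 : ℂ)*bb^4*gc^2*x^2*u + (-27/64 : ℂ)*bb^4*gc^2*x^3*u + (-27/64 : ℂ)*bb^4*gc^3*x^3*u + (-1 : ℂ)*sc*bb^2 + (-3/2 : ℂ)*sc*bb^2*x + (27/16 : ℂ)*sc*bb^2*x^2 + (-3/2 : ℂ)*sc*bb^2*gc*x + (-9/8 : ℂ)*sc*bb^2*gc*x^2 + (-9/16 : ℂ)*sc*bb^2*gc^2*x^2) * hI

lemma a0_eq (ck k a₁ c γ Pr : ℝ)
    (hc2 : (c:ℂ)^2 = (ck:ℂ)^2 + ((k:ℂ)*(a₁:ℂ))^2) (hck0 : (ck:ℂ) ≠ 0) :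
    P k a₁ c γ Pr (Zf ck k a₁ γ Pr)
      = (p2c ck k a₁ γ + p3c ck k a₁ γ * ((Pr:ℂ))⁻¹) * (((Pr:ℂ))⁻¹)^2 := by
  have hu : (ck:ℂ) * ((ck:ℂ))⁻¹ = 1 := mul_inv_cancel₀ hck0
  have h := key_id (ck:ℂ) ((k:ℂ)*(a₁:ℂ)) (γ:ℂ) (((Pr:ℂ))⁻¹) (((ck:ℂ))⁻¹) hu
  refine Eq.trans ?_ (Eq.trans h ?_)
  · simp only [P, Zf]
    push_cast
    rw [hc2]
    ring
  · simp only [p2c, p3c]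

set_option maxHeartbeats 1000000 in
/-- Assume 0 < k a₁ < c. There exist Pr₀ > 0 and a root branch X⁺ of
P_Pr on (Pr₀, ∞) with, as Pr → ∞,
Re X⁺(Pr) = c(k) + (3(γ−1)k²a₁²/(4c(k)))·Pr⁻¹ + O(Pr⁻²) and
Im X⁺(Pr) = −k a₁ (1 + 3(γ−1)/(4 Pr)) + O(Pr⁻²). -/
theorem stmt_16 (ρ μ c k γ : ℝ) (hρ : 0 < ρ) (hμ : 0 < μ) (hc : 0 < c) (hk : 0 < k)
    (hγ : 1 < γ) (a₁ : ℝ) (ha₁ : a₁ = 2 * μ / (3 * ρ))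
    (hka : 0 < k * a₁) (hlt : k * a₁ < c)
    (ck : ℝ) (hck : ck = Real.sqrt (c ^ 2 - k ^ 2 * a₁ ^ 2)) :
    ∃ Pr₀ : ℝ, 0 < Pr₀ ∧ ∃ Xp : ℝ → ℂ,
      (∀ Pr : ℝ, Pr₀ < Pr → P k a₁ c γ Pr (Xp Pr) = 0)
      ∧ (fun Pr : ℝ => (Xp Pr).re - (ck + (3 * (γ - 1) * k ^ 2 * a₁ ^ 2 / (4 * ck)) / Pr))
          =O[atTop] (fun Pr : ℝ => (Pr ^ 2)⁻¹)
      ∧ (fun Pr : ℝ => (Xp Pr).im - (-(k * a₁) * (1 + 3 * (γ - 1) / (4 * Pr))))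
          =O[atTop] (fun Pr : ℝ => (Pr ^ 2)⁻¹) := by
  classical
  have hdisc : 0 < c ^ 2 - k ^ 2 * a₁ ^ 2 := by nlinarith
  have hckpos : 0 < ck := by rw [hck]; exact Real.sqrt_pos.2 hdisc
  have hck2 : ck ^ 2 = c ^ 2 - k ^ 2 * a₁ ^ 2 := by rw [hck]; exact Real.sq_sqrt hdisc.le
  have hc2R : c ^ 2 = ck ^ 2 + (k * a₁) ^ 2 := by nlinarith
  have hc2 : (c:ℂ) ^ 2 = (ck:ℂ) ^ 2 + ((k:ℂ) * (a₁:ℂ)) ^ 2 := by exact_mod_cast hc2R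
  have hck0 : (ck:ℂ) ≠ 0 := Complex.ofReal_ne_zero.2 hckpos.ne'
  set C : ℝ := ‖p2c ck k a₁ γ‖ + ‖p3c ck k a₁ γ‖ with hC
  have hC0 : 0 ≤ C := by positivity
  set m : ℝ := ck ^ 2 with hm
  have hmpos : 0 < m := by positivity
  -- the approximate root tends to Z₀
  have hZre : Tendsto (fun Pr : ℝ => ck + (3 * (γ - 1) * k ^ 2 * a₁ ^ 2 / (4 * ck)) / Pr)
      atTop (nhds ck) := by
    have h1 : Tendsto (fun Pr : ℝ => (3 * (γ - 1) * k ^ 2 * a₁ ^ 2 / (4 * ck)) / Pr)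
        atTop (nhds 0) := Tendsto.div_atTop tendsto_const_nhds tendsto_id
    simpa using tendsto_const_nhds.add h1
  have hZim : Tendsto (fun Pr : ℝ => -(k * a₁) * (1 + 3 * (γ - 1) / (4 * Pr)))
      atTop (nhds (-(k * a₁))) := by
    have h4 : Tendsto (fun Pr : ℝ => 4 * Pr) atTop atTop :=
      Tendsto.const_mul_atTop (by norm_num) tendsto_id
    have h1 : Tendsto (fun Pr : ℝ => 3 * (γ - 1) / (4 * Pr)) atTop (nhds 0) :=
      Tendsto.div_atTop tendsto_const_nhds h4
    have h2 : Tendsto (fun Pr : ℝ => -(k * a₁) * (1 + 3 * (γ - 1) / (4 * Pr)))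
        atTop (nhds (-(k * a₁) * (1 + 0))) :=
      tendsto_const_nhds.mul (tendsto_const_nhds.add h1)
    simpa using h2
  set Z₀ : ℂ := ((ck : ℝ) : ℂ) + ((-(k * a₁) : ℝ) : ℂ) * I with hZ₀
  have hZt : Tendsto (fun Pr : ℝ => Zf ck k a₁ γ Pr) atTop (nhds Z₀) := by
    have h1 := (Complex.continuous_ofReal.tendsto ck).comp hZre
    have h2 := ((Complex.continuous_ofReal.tendsto (-(k * a₁))).comp hZim).mul_const I
    have h3 := h1.add h2
    simp only [Function.comp_def] at h3
    simpa [Zf, hZ₀, Function.comp_def] using h3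
  -- auxiliary complex limits
  have hq1 : Tendsto (fun Pr : ℝ => 3 * (γ:ℂ) / (4 * (Pr:ℂ))) atTop (nhds 0) := by
    have h4 : Tendsto (fun Pr : ℝ => 4 * Pr) atTop atTop :=
      Tendsto.const_mul_atTop (by norm_num) tendsto_id
    have hr : Tendsto (fun Pr : ℝ => 3 * γ / (4 * Pr)) atTop (nhds 0) :=
      Tendsto.div_atTop tendsto_const_nhds h4
    have h := (Complex.continuous_ofReal.tendsto 0).comp hr
    simp only [Function.comp_def, Complex.ofReal_zero] at h
    have he : (fun Pr : ℝ => ((3 * γ / (4 * Pr) : ℝ) : ℂ))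
        = fun Pr : ℝ => 3 * (γ:ℂ) / (4 * (Pr:ℂ)) := by
      funext Pr; push_cast; ring
    rw [← he]
    exact h
  have hq2 : Tendsto (fun Pr : ℝ => 3 * (γ:ℂ) / (Pr:ℂ)) atTop (nhds 0) := by
    have hr : Tendsto (fun Pr : ℝ => 3 * γ / Pr) atTop (nhds 0) :=
      Tendsto.div_atTop tendsto_const_nhds tendsto_id
    have h := (Complex.continuous_ofReal.tendsto 0).comp hr
    simp only [Function.comp_def, Complex.ofReal_zero] at h
    have he : (fun Pr : ℝ => ((3 * γ / Pr : ℝ) : ℂ))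
        = fun Pr : ℝ => 3 * (γ:ℂ) / (Pr:ℂ) := by
      funext Pr; push_cast; ring
    rw [← he]
    exact h
  -- limit of the linear coefficient
  have ha1t : Tendsto (fun Pr : ℝ => A1f ck k a₁ c γ Pr) atTop
      (nhds (3 * Z₀ ^ 2 + 4 * I * (k:ℂ) * (a₁:ℂ) * (1 + 0) * Z₀
          - ((c:ℂ) ^ 2 + 0 * (a₁:ℂ) ^ 2 * (k:ℂ) ^ 2))) := by
    simp only [A1f]
    exact ((tendsto_const_nhds.mul (hZt.pow 2)).add
      ((tendsto_const_nhds.mul (tendsto_const_nhds.add hq1)).mul hZt)).sub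
      (tendsto_const_nhds.add ((hq2.mul tendsto_const_nhds).mul tendsto_const_nhds))
  set L : ℂ := ((2 * ck ^ 2 : ℝ) : ℂ) + ((-(2 * ck * (k * a₁)) : ℝ) : ℂ) * I with hL
  have hLeq : 3 * Z₀ ^ 2 + 4 * I * (k:ℂ) * (a₁:ℂ) * (1 + 0) * Z₀
      - ((c:ℂ) ^ 2 + 0 * (a₁:ℂ) ^ 2 * (k:ℂ) ^ 2) = L := by
    rw [hZ₀, hL, hc2]
    push_cast
    linear_combination (-(k:ℂ) ^ 2 * (a₁:ℂ) ^ 2) * Complex.I_sq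
  rw [hLeq] at ha1t
  have hLre : L.re = 2 * ck ^ 2 := by
    rw [hL]
    simp [Complex.add_re, Complex.mul_I_re, ← Complex.ofReal_pow]
  have hLnorm : 2 * ck ^ 2 ≤ ‖L‖ := by
    have h := Complex.abs_re_le_norm L
    rw [hLre] at h
    calc 2 * ck ^ 2 ≤ |2 * ck ^ 2| := le_abs_self _
      _ ≤ ‖L‖ := h
  have hE3 : ∀ᶠ Pr in atTop, m ≤ ‖A1f ck k a₁ c γ Pr‖ := by
    have hmL : m < ‖L‖ := by nlinarith [hLnorm, hckpos, sq_nonneg ck]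
    exact ha1t.norm.eventually (eventually_ge_nhds hmL)
  -- limit of the quadratic coefficient
  have ha2t : Tendsto (fun Pr : ℝ => A2f ck k a₁ γ Pr) atTop
      (nhds (3 * Z₀ + 2 * I * (k:ℂ) * (a₁:ℂ) * (1 + 0))) := by
    simp only [A2f]
    exact (tendsto_const_nhds.mul hZt).add
      (tendsto_const_nhds.mul (tendsto_const_nhds.add hq1))
  set M : ℝ := ‖3 * Z₀ + 2 * I * (k:ℂ) * (a₁:ℂ) * (1 + 0)‖ + 1 with hM
  have hM0 : 0 ≤ M := by positivity
  have hE4 : ∀ᶠ Pr in atTop, ‖A2f ck k a₁ γ Pr‖ ≤ M :=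
    ha2t.norm.eventually (eventually_le_nhds (by rw [hM]; linarith))
  -- the smallness condition for the contraction radius
  have hρt : Tendsto (fun Pr : ℝ => 2 * C / (m * Pr ^ 2)) atTop (nhds 0) :=
    Tendsto.div_atTop tendsto_const_nhds
      (Tendsto.const_mul_atTop hmpos (tendsto_pow_atTop (by norm_num)))
  have hE5 : ∀ᶠ Pr in atTop,
      2 * M * (2 * C / (m * Pr ^ 2)) + 3 * (2 * C / (m * Pr ^ 2)) ^ 2 ≤ m / 2 := by
    have hφt : Tendsto (fun Pr : ℝ =>
        2 * M * (2 * C / (m * Pr ^ 2)) + 3 * (2 * C / (m * Pr ^ 2)) ^ 2) atTop (nhds 0) := by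
      have := (hρt.const_mul (2 * M)).add ((hρt.pow 2).const_mul 3)
      simpa using this
    exact hφt.eventually (eventually_le_nhds (by positivity))
  -- pick a threshold
  obtain ⟨Pr₁, hPr₁⟩ := eventually_atTop.1 ((hE3.and hE4).and hE5)
  set Pr₀ : ℝ := max Pr₁ 1 with hPr₀
  have hPr₀pos : 0 < Pr₀ := lt_of_lt_of_le one_pos (le_max_right _ _)
  -- existence of an exact root near the approximate one
  have hroot : ∀ Pr : ℝ, Pr₀ < Pr → ∃ w : ℂ, ‖w‖ ≤ 2 * C / (m * Pr ^ 2)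
      ∧ P k a₁ c γ Pr (Zf ck k a₁ γ Pr + w) = 0 := by
    intro Pr hPr
    have h1le : (1:ℝ) ≤ Pr := le_of_lt (lt_of_le_of_lt (le_max_right Pr₁ 1) hPr)
    have hPrpos : (0:ℝ) < Pr := lt_of_lt_of_le one_pos h1le
    obtain ⟨⟨hg3, hg4⟩, hg5⟩ := hPr₁ Pr (le_of_lt (lt_of_le_of_lt (le_max_left Pr₁ 1) hPr))
    have hPrC : (Pr:ℂ) ≠ 0 := Complex.ofReal_ne_zero.2 hPrpos.ne'
    have hA0 := a0_eq ck k a₁ c γ Pr hc2 hck0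
    have hxnorm : ‖((Pr:ℂ))⁻¹‖ = Pr⁻¹ := by
      rw [norm_inv, Complex.norm_real, Real.norm_eq_abs, abs_of_pos hPrpos]
    have hxle : ‖((Pr:ℂ))⁻¹‖ ≤ 1 := by
      rw [hxnorm]
      exact inv_le_one_of_one_le₀ h1le
    have hA0n : ‖P k a₁ c γ Pr (Zf ck k a₁ γ Pr)‖ ≤ C / Pr ^ 2 := by
      rw [hA0, norm_mul, norm_pow, hxnorm]
      have h1 : ‖p2c ck k a₁ γ + p3c ck k a₁ γ * ((Pr:ℂ))⁻¹‖ ≤ C := by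
        calc ‖p2c ck k a₁ γ + p3c ck k a₁ γ * ((Pr:ℂ))⁻¹‖
            ≤ ‖p2c ck k a₁ γ‖ + ‖p3c ck k a₁ γ‖ * ‖((Pr:ℂ))⁻¹‖ := by
              refine (norm_add_le _ _).trans ?_
              rw [norm_mul]
          _ ≤ C := by
              rw [hC]
              nlinarith [norm_nonneg (p3c ck k a₁ γ), hxle, norm_nonneg (((Pr:ℂ))⁻¹)]
      calc ‖p2c ck k a₁ γ + p3c ck k a₁ γ * ((Pr:ℂ))⁻¹‖ * (Pr⁻¹) ^ 2
          ≤ C * (Pr⁻¹) ^ 2 := mul_le_mul_of_nonneg_right h1 (by positivity)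
        _ = C / Pr ^ 2 := by rw [inv_pow]; ring
    have hrr : (0:ℝ) ≤ 2 * C / (m * Pr ^ 2) := by positivity
    have ha0cond : ‖P k a₁ c γ Pr (Zf ck k a₁ γ Pr)‖ ≤ m * (2 * C / (m * Pr ^ 2)) / 2 := by
      have he : m * (2 * C / (m * Pr ^ 2)) / 2 = C / Pr ^ 2 := by
        rw [hm]
        field_simp
      rw [he]; exact hA0n
    have hKcond : 2 * ‖A2f ck k a₁ γ Pr‖ * (2 * C / (m * Pr ^ 2))
        + 3 * (2 * C / (m * Pr ^ 2)) ^ 2 ≤ m / 2 := by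
      nlinarith [hg4, hg5, hrr]
    obtain ⟨w, hwn, hweq⟩ := cubic_small_root_s16 (P k a₁ c γ Pr (Zf ck k a₁ γ Pr))
      (A1f ck k a₁ c γ Pr) (A2f ck k a₁ γ Pr) m (2 * C / (m * Pr ^ 2)) hmpos hg3 ha0cond hKcond
    refine ⟨w, hwn, ?_⟩
    rw [taylor_P]
    exact hweq
  -- the real and imaginary parts of the approximate root
  have hZfre : ∀ Pr : ℝ, (Zf ck k a₁ γ Pr).re
      = ck + 3 * (γ - 1) * k ^ 2 * a₁ ^ 2 / (4 * ck) / Pr := by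
    intro Pr
    simp only [Zf, Complex.add_re, Complex.ofReal_re, Complex.mul_I_re, Complex.ofReal_im,
      neg_zero, add_zero]
  have hZfim : ∀ Pr : ℝ, (Zf ck k a₁ γ Pr).im
      = -(k * a₁) * (1 + 3 * (γ - 1) / (4 * Pr)) := by
    intro Pr
    simp only [Zf, Complex.add_im, Complex.ofReal_im, Complex.mul_I_im, Complex.ofReal_re,
      zero_add]
  -- choose the root branch
  refine ⟨Pr₀, hPr₀pos,
    fun Pr => if h : Pr₀ < Pr then Zf ck k a₁ γ Pr + Classical.choose (hroot Pr h) else 0,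
    ?_, ?_, ?_⟩
  · intro Pr h
    simp only [dif_pos h]
    exact (Classical.choose_spec (hroot Pr h)).2
  · rw [isBigO_iff]
    refine ⟨2 * C / m, ?_⟩
    filter_upwards [eventually_gt_atTop Pr₀, eventually_ge_atTop 1] with Pr h h1
    have hPrpos : (0:ℝ) < Pr := lt_of_lt_of_le one_pos h1
    simp only [dif_pos h]
    obtain ⟨hwn, -⟩ := Classical.choose_spec (hroot Pr h)
    set w := Classical.choose (hroot Pr h) with hwdef
    rw [Complex.add_re, hZfre, add_sub_cancel_left]
    have h2 : ‖(Pr ^ 2)⁻¹‖ = (Pr ^ 2)⁻¹ := by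
      rw [Real.norm_eq_abs, abs_of_pos (by positivity)]
    rw [Real.norm_eq_abs, h2]
    calc |w.re| ≤ ‖w‖ := by
          exact Complex.abs_re_le_norm w
      _ ≤ 2 * C / (m * Pr ^ 2) := hwn
      _ = 2 * C / m * (Pr ^ 2)⁻¹ := by
          rw [div_mul_eq_div_div]
          ring
  · rw [isBigO_iff]
    refine ⟨2 * C / m, ?_⟩
    filter_upwards [eventually_gt_atTop Pr₀, eventually_ge_atTop 1] with Pr h h1
    have hPrpos : (0:ℝ) < Pr := lt_of_lt_of_le one_pos h1
    simp only [dif_pos h]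
    obtain ⟨hwn, -⟩ := Classical.choose_spec (hroot Pr h)
    set w := Classical.choose (hroot Pr h) with hwdef
    rw [Complex.add_im, hZfim, add_sub_cancel_left]
    have h2 : ‖(Pr ^ 2)⁻¹‖ = (Pr ^ 2)⁻¹ := by
      rw [Real.norm_eq_abs, abs_of_pos (by positivity)]
    rw [Real.norm_eq_abs, h2]
    calc |w.im| ≤ ‖w‖ := by
          exact Complex.abs_im_le_norm w
      _ ≤ 2 * C / (m * Pr ^ 2) := hwn
      _ = 2 * C / m * (Pr ^ 2)⁻¹ := by
          rw [div_mul_eq_div_div]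
          ring
end

section
/- Assume 0 < k a₁ < c/√γ. There exist ε > 0 and a function ξ⁺ : (0, ε) → ℂ such that P_Pr(ξ⁺(Pr)) = 0 for all Pr ∈ (0, ε) and, as Pr → 0⁺: Re ξ⁺(Pr) = c_T(k) − ((γ−1) c²/(3 γ² c_T(k))) · Pr + O(Pr²) and Im ξ⁺(Pr) = −k a₁ − ((γ−1) c²/(3 γ² k a₁)) · Pr + O(Pr²). (Thus for small Prandtl number the phase speed is, at leading order, the isothermal value c_T(k).) -/
open Complex Filter Asymptotics
open Topology

set_option maxHeartbeats 2000000 in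
theorem aux17 (c γ m cT : ℝ) (hc : 0 < c) (hγ : 1 < γ) (hm : 0 < m) (hcT0 : 0 < cT)
    (hcT2 : cT ^ 2 = c ^ 2 / γ - m ^ 2) :
    ∃ ε : ℝ, 0 < ε ∧ ∃ ξp : ℝ → ℂ,
      (∀ s : ℝ, s ∈ Set.Ioo 0 ε →
        (ξp s) ^ 3 + 2 * I * (m : ℂ) * (1 + 3 * (γ : ℂ) / (4 * (s : ℂ))) * (ξp s) ^ 2
          - ((c : ℂ) ^ 2 + (3 * (γ : ℂ) / (s : ℂ)) * (m : ℂ) ^ 2) * (ξp s)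
          - (3 * I * (m : ℂ) * (c : ℂ) ^ 2) / (2 * (s : ℂ)) = 0)
      ∧ (fun s : ℝ => (ξp s).re - (cT - ((γ - 1) * c ^ 2 / (3 * γ ^ 2 * cT)) * s))
          =O[nhdsWithin 0 (Set.Ioi 0)] (fun s : ℝ => s ^ 2)
      ∧ (fun s : ℝ => (ξp s).im - (-m - ((γ - 1) * c ^ 2 / (3 * γ ^ 2 * m)) * s))
          =O[nhdsWithin 0 (Set.Ioi 0)] (fun s : ℝ => s ^ 2) := by
  classical
  have hγ0 : (0:ℝ) < γ := lt_trans one_pos hγ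
  have hγ1 : (0:ℝ) < γ - 1 := sub_pos.2 hγ
  obtain ⟨l, hldef⟩ : ∃ x, x = nhdsWithin (0:ℝ) (Set.Ioi 0) := ⟨_, rfl⟩
  obtain ⟨g, hgdef⟩ : ∃ x, x = 3 * γ * m / 2 := ⟨_, rfl⟩
  have hgpos : 0 < g := by rw [hgdef]; positivity
  obtain ⟨β, hβdef⟩ : ∃ x, x = (γ - 1) * c ^ 2 / (3 * γ ^ 2 * m) := ⟨_, rfl⟩
  have hβpos : 0 < β := by rw [hβdef]; positivity
  obtain ⟨α, hαdef⟩ : ∃ x, x = (γ - 1) * c ^ 2 / (3 * γ ^ 2 * cT) := ⟨_, rfl⟩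
  have hαpos : 0 < α := by rw [hαdef]; positivity
  obtain ⟨u, hudef⟩ : ∃ x, x = 2 * β := ⟨_, rfl⟩
  have hupos : 0 < u := by rw [hudef]; linarith
  obtain ⟨M, hMdef⟩ : ∃ x, x = 2 * m * u / g + 1 := ⟨_, rfl⟩
  have hMpos : 0 < M := by
    rw [hMdef]
    have h1 : 0 < 2 * m * u / g := div_pos (by nlinarith) hgpos
    linarith
  -- relation m*β = cT*α
  have hmβ : m * β = cT * α := by
    rw [hβdef, hαdef]; field_simp
  -- basic filter facts
  have hev_pos : ∀ᶠ s in l, 0 < s := by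
    rw [hldef]; exact eventually_mem_nhdsWithin.mono fun x hx => hx
  have hll : l ≤ 𝓝 0 := by rw [hldef]; exact nhdsWithin_le_nhds
  have hts : Tendsto (fun s : ℝ => s) l (𝓝 0) := tendsto_id.mono_right hll |>.mono_left le_rfl

  -- the real cubic
  obtain ⟨Q, hQdef⟩ : ∃ x : ℝ → ℝ → ℝ, x = fun s y =>
      y ^ 3 + (2 * m + 3 * γ * m / (2 * s)) * y ^ 2 + (c ^ 2 + 3 * γ * m ^ 2 / s) * y
        + 3 * m * c ^ 2 / (2 * s) := ⟨_, rfl⟩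
  obtain ⟨Y, hYdef⟩ : ∃ x : ℝ → ℝ, x = fun s => -g / s + u * s := ⟨_, rfl⟩
  -- expansion identity at probe points
  have hQid : ∀ s : ℝ, s ≠ 0 → ∀ t : ℝ, Q s (Y s + t * s ^ 2) =
      t * g ^ 2 - 2 * m * g * u - 2 * m * g * t * s - 2 * g * (u + t * s) ^ 2 * s
        + 2 * m * (u + t * s) ^ 2 * s ^ 2 + (u + t * s) ^ 3 * s ^ 3 + c ^ 2 * (u + t * s) * s := by
    intro s hs t
    simp only [hQdef, hYdef, hgdef, hudef, hβdef]
    field_simp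
    ring
  -- limits of the probe values
  have hcongr : ∀ t : ℝ, (fun s => Q s (Y s + t * s ^ 2)) =ᶠ[l] (fun s =>
      t * g ^ 2 - 2 * m * g * u - 2 * m * g * t * s - 2 * g * (u + t * s) ^ 2 * s
        + 2 * m * (u + t * s) ^ 2 * s ^ 2 + (u + t * s) ^ 3 * s ^ 3 + c ^ 2 * (u + t * s) * s) := by
    intro t
    filter_upwards [hev_pos] with s hs
    exact hQid s hs.ne' t
  have hpolyt : ∀ t : ℝ, Tendsto (fun s : ℝ =>
      t * g ^ 2 - 2 * m * g * u - 2 * m * g * t * s - 2 * g * (u + t * s) ^ 2 * s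
        + 2 * m * (u + t * s) ^ 2 * s ^ 2 + (u + t * s) ^ 3 * s ^ 3 + c ^ 2 * (u + t * s) * s)
      l (𝓝 (t * g ^ 2 - 2 * m * g * u)) := by
    intro t
    have hct : ContinuousAt (fun s : ℝ =>
      t * g ^ 2 - 2 * m * g * u - 2 * m * g * t * s - 2 * g * (u + t * s) ^ 2 * s
        + 2 * m * (u + t * s) ^ 2 * s ^ 2 + (u + t * s) ^ 3 * s ^ 3 + c ^ 2 * (u + t * s) * s) 0 := by
      fun_prop
    have h0 := hct.tendsto.mono_left hll
    have hF0 : t * g ^ 2 - 2 * m * g * u - 2 * m * g * t * 0 - 2 * g * (u + t * 0) ^ 2 * 0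
        + 2 * m * (u + t * 0) ^ 2 * 0 ^ 2 + (u + t * 0) ^ 3 * 0 ^ 3 + c ^ 2 * (u + t * 0) * 0
        = t * g ^ 2 - 2 * m * g * u := by ring
    rwa [hF0] at h0
  have hQlim : ∀ t : ℝ, Tendsto (fun s => Q s (Y s + t * s ^ 2)) l (𝓝 (t * g ^ 2 - 2 * m * g * u)) := by
    intro t
    exact Tendsto.congr' (hcongr t).symm (hpolyt t)
  have hhi : ∀ᶠ s in l, 0 < Q s (Y s + M * s ^ 2) := by
    refine (hQlim M).eventually_const_lt ?_
    have : M * g ^ 2 - 2 * m * g * u = g ^ 2 := by rw [hMdef]; field_simp; ring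
    rw [this]; positivity
  have hlo : ∀ᶠ s in l, Q s (Y s + (-M) * s ^ 2) < 0 := by
    refine (hQlim (-M)).eventually_lt_const ?_
    have h1 : (-M) * g ^ 2 - 2 * m * g * u < 0 := by
      have : 0 < M * g ^ 2 + 2 * m * g * u := by positivity
      nlinarith
    exact h1
  -- the root y0 via IVT
  obtain ⟨y0, hy0def⟩ : ∃ x : ℝ → ℝ, x = fun s =>
      if h : ∃ y ∈ Set.Icc (Y s + (-M) * s ^ 2) (Y s + M * s ^ 2), Q s y = 0 then h.choose
      else Y s := ⟨_, rfl⟩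
  have hy0ev : ∀ᶠ s in l, Q s (y0 s) = 0 ∧ |y0 s - Y s| ≤ M * s ^ 2 := by
    filter_upwards [hhi, hlo, hev_pos] with s hhi' hlo' hs
    have hle : Y s + (-M) * s ^ 2 ≤ Y s + M * s ^ 2 := by
      have h2 : 0 ≤ M * s ^ 2 := by positivity
      linarith
    have hcont : ContinuousOn (Q s) (Set.Icc (Y s + (-M) * s ^ 2) (Y s + M * s ^ 2)) := by
      simp only [hQdef]; fun_prop
    have himg := intermediate_value_Icc hle hcont
    have h0mem : (0:ℝ) ∈ Set.Icc (Q s (Y s + (-M) * s ^ 2)) (Q s (Y s + M * s ^ 2)) :=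
      ⟨hlo'.le, hhi'.le⟩
    obtain ⟨y, hyI, hyQ⟩ := himg h0mem
    have hex : ∃ y ∈ Set.Icc (Y s + (-M) * s ^ 2) (Y s + M * s ^ 2), Q s y = 0 := ⟨y, hyI, hyQ⟩
    have h1 : y0 s = hex.choose := by rw [hy0def]; simp only [dif_pos hex]
    obtain ⟨hI, hQ0⟩ := hex.choose_spec
    rw [h1]
    refine ⟨hQ0, abs_le.2 ⟨by linarith [hI.1], by linarith [hI.2]⟩⟩
  -- e := y0 - Y
  obtain ⟨e, hedef⟩ : ∃ x : ℝ → ℝ, x = fun s => y0 s - Y s := ⟨_, rfl⟩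
  have hee : ∀ᶠ s in l, |e s| ≤ M * s ^ 2 := by
    filter_upwards [hy0ev] with s hs
    rw [hedef]; exact hs.2
  have ht2 : Tendsto (fun s : ℝ => s ^ 2) l (𝓝 0) := by
    have h := hts.mul hts
    have heq : (fun s : ℝ => s * s) = fun s : ℝ => s ^ 2 := by funext s; ring
    rw [heq, mul_zero] at h
    exact h
  have htM2 : Tendsto (fun s : ℝ => M * s ^ 2) l (𝓝 0) := by
    have h := ht2.const_mul M
    rwa [mul_zero] at h
  have hetend : Tendsto e l (𝓝 0) := by
    refine squeeze_zero_norm' ?_ htM2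
    filter_upwards [hee] with s hs
    simpa [Real.norm_eq_abs] using hs
  -- y0 negative
  have hy0neg : ∀ᶠ s in l, y0 s < 0 := by
    have hδpos : 0 < min 1 (g / (u + M + 1)) := by
      refine lt_min one_pos (div_pos hgpos (by linarith))
    have hsmall : ∀ᶠ s in l, s < min 1 (g / (u + M + 1)) :=
      hts.eventually_lt_const hδpos
    have hsm : ∀ᶠ s in l, u * s ^ 2 + M * s ^ 3 < g := by
      filter_upwards [hsmall, hev_pos] with s h1 hs
      have hs1 : s < 1 := lt_of_lt_of_le h1 (min_le_left _ _)
      have hs2 : s < g / (u + M + 1) := lt_of_lt_of_le h1 (min_le_right _ _)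
      have hs3 : s * (u + M + 1) < g :=
        (lt_div_iff₀ (show (0:ℝ) < u + M + 1 by linarith)).1 hs2
      have e3 : 0 ≤ u * (s - s ^ 2) := by nlinarith [mul_pos hs (show (0:ℝ) < 1 - s by linarith)]
      have e4 : 0 ≤ M * (s ^ 2 - s ^ 3) := by
        nlinarith [mul_pos (mul_pos hs hs) (show (0:ℝ) < 1 - s by linarith)]
      have e5 : 0 ≤ M * (s - s ^ 2) := by nlinarith [mul_pos hs (show (0:ℝ) < 1 - s by linarith)]
      nlinarith [e3, e4, e5, hs3, hs]
    filter_upwards [hsm, hee, hev_pos] with s h1 h2 hs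
    have hy0eq : y0 s = -g / s + u * s + e s := by
      have : e s = y0 s - Y s := by rw [hedef]
      rw [hYdef] at this; simp at this; linarith
    have h3 : e s ≤ M * s ^ 2 := (abs_le.1 h2).2
    have h4 : y0 s ≤ -g / s + u * s + M * s ^ 2 := by rw [hy0eq]; linarith
    have h5 : -g / s + u * s + M * s ^ 2 < 0 := by
      have hmul : (-g / s + u * s + M * s ^ 2) * s = -(g - (u * s ^ 2 + M * s ^ 3)) := by
        field_simp; ring
      nlinarith [hmul, h1, hs]
    linarith
  -- main quantities
  obtain ⟨σ, hσdef⟩ : ∃ x : ℝ → ℝ, x = fun s => -(2 * m + 3 * γ * m / (2 * s)) - y0 s := ⟨_, rfl⟩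
  obtain ⟨p, hpdef⟩ : ∃ x : ℝ → ℝ, x = fun s => 3 * m * c ^ 2 / (2 * s) / y0 s := ⟨_, rfl⟩
  obtain ⟨r, hrdef⟩ : ∃ x : ℝ → ℝ, x = fun s => -(σ s) ^ 2 / 4 - p s := ⟨_, rfl⟩
  obtain ⟨N, hNdef⟩ : ∃ x : ℝ → ℝ, x = fun s => r s - (cT - α * s) ^ 2 := ⟨_, rfl⟩
  obtain ⟨W, hWdef⟩ : ∃ x : ℝ → ℝ, x = fun s => g - u * s ^ 2 - s * e s := ⟨_, rfl⟩
  obtain ⟨S, hSdef⟩ : ∃ x : ℝ → ℝ, x =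
    fun s => (m + β * s + e s / 2) ^ 2 + (cT - α * s) ^ 2 := ⟨_, rfl⟩
  obtain ⟨U, hUdef⟩ : ∃ x : ℝ → ℝ, x = fun s =>
    -(g * m) * e s - g * (α ^ 2 + β ^ 2) * s ^ 2 - g * β * (s * e s) - g / 4 * (e s) ^ 2
      + (u * s ^ 2 + s * e s) * S s := ⟨_, rfl⟩
  -- pointwise identities
  have hσe : ∀ᶠ s in l, σ s = -2 * m - u * s - e s := by
    filter_upwards [hev_pos] with s hs
    have he : e s = y0 s - Y s := by rw [hedef]
    rw [hσdef]
    simp only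
    rw [hYdef] at he
    simp only at he
    rw [hgdef] at he
    field_simp at he ⊢
    linarith
  have hsy0 : ∀ᶠ s in l, s * y0 s = -W s := by
    filter_upwards [hev_pos] with s hs
    have he : e s = y0 s - Y s := by rw [hedef]
    rw [hYdef] at he; simp only at he
    rw [hWdef]; simp only
    rw [hgdef] at he ⊢
    field_simp at he ⊢
    linarith
  -- the exact form of U
  have hγcT2 : γ * cT ^ 2 = c ^ 2 - γ * m ^ 2 := by
    rw [hcT2]; field_simp
  have hUid : ∀ s : ℝ, U s = 3 * m * c ^ 2 / 2 - W s * S s := by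
    intro s
    rw [hUdef, hWdef, hSdef, hudef, hgdef]
    simp only
    linear_combination (3 * m / 2) * hγcT2 + 3 * γ * m * s * hmβ
  -- N = U / W pointwise
  have hNU : ∀ᶠ s in l, N s = U s / W s := by
    filter_upwards [hev_pos, hy0neg, hσe, hsy0] with s hs hy0n hσe' hsy0'
    have hWpos' : 0 < W s := by
      have h1 : s * y0 s < 0 := mul_neg_of_pos_of_neg hs hy0n
      rw [hsy0'] at h1; linarith
    have hWne : W s ≠ 0 := ne_of_gt hWpos'
    have hy0ne : y0 s ≠ 0 := ne_of_lt hy0n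
    have hps : p s = -(3 * m * c ^ 2 / 2) / W s := by
      rw [hpdef]; simp only
      rw [div_div]
      rw [show 2 * s * y0 s = -(2 * W s) by linarith [hsy0']]
      rw [div_neg, ← div_div]
      rw [neg_div]
    rw [hNdef, hrdef]; simp only
    rw [hps, hσe', hUid s, hSdef, hudef]; simp only
    field_simp
    ring
  -- tendsto facts
  have hse : Tendsto (fun s : ℝ => s * e s) l (𝓝 0) := by
    have h := hts.mul hetend; rwa [mul_zero] at h
  have hus2 : Tendsto (fun s : ℝ => u * s ^ 2) l (𝓝 0) := by
    have h := ht2.const_mul u; rwa [mul_zero] at h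
  have hWtend : Tendsto W l (𝓝 g) := by
    rw [hWdef]
    have h := (tendsto_const_nhds (x := g) (f := l)).sub hus2 |>.sub hse
    rwa [sub_zero, sub_zero] at h
  have hq1tend : Tendsto (fun s : ℝ => cT - α * s) l (𝓝 cT) := by
    have h := (tendsto_const_nhds (x := cT) (f := l)).sub (hts.const_mul α)
    rwa [mul_zero, sub_zero] at h
  have hq2tend : Tendsto (fun s : ℝ => (cT - α * s) ^ 2) l (𝓝 (cT ^ 2)) := hq1tend.pow 2
  have hStend : Tendsto S l (𝓝 (m ^ 2 + cT ^ 2)) := by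
    rw [hSdef]
    have h1 : Tendsto (fun s : ℝ => m + β * s + e s / 2) l (𝓝 m) := by
      have h := ((tendsto_const_nhds (x := m) (f := l)).add
        (hts.const_mul β)).add (hetend.div_const 2)
      rwa [mul_zero, add_zero, zero_div, add_zero] at h
    exact (h1.pow 2).add hq2tend
  -- big-O facts
  have heO : e =O[l] (fun s : ℝ => s ^ 2) := by
    rw [isBigO_iff]
    refine ⟨M, ?_⟩
    filter_upwards [hee] with s hs
    calc ‖e s‖ = |e s| := by rw [Real.norm_eq_abs]
    _ ≤ M * s ^ 2 := hs
    _ ≤ M * ‖s ^ 2‖ := by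
      rw [show ‖s ^ 2‖ = s ^ 2 from by
        rw [Real.norm_eq_abs]; exact abs_of_nonneg (sq_nonneg s)]
  have hsO : (fun s : ℝ => s) =O[l] (fun _ : ℝ => (1:ℝ)) := hts.isBigO_one ℝ
  have hs2O1 : (fun s : ℝ => s ^ 2) =O[l] (fun _ : ℝ => (1:ℝ)) := ht2.isBigO_one ℝ
  have hseO : (fun s : ℝ => s * e s) =O[l] (fun s : ℝ => s ^ 2) :=
    (hsO.mul heO).congr (fun s => rfl) (fun s => by ring)
  have he2O : (fun s : ℝ => (e s) ^ 2) =O[l] (fun s : ℝ => s ^ 2) :=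
    ((heO.mul heO).trans ((hs2O1.mul (isBigO_refl (fun s : ℝ => s ^ 2) l)).congr
      (fun s => rfl) (fun s => by ring))).congr (fun s => by ring) (fun s => rfl)
  have hSO : S =O[l] (fun _ : ℝ => (1:ℝ)) := hStend.isBigO_one ℝ
  have hUO : U =O[l] (fun s : ℝ => s ^ 2) := by
    rw [hUdef]
    have t1 := heO.const_mul_left (-(g * m))
    have t2 := (isBigO_refl (fun s : ℝ => s ^ 2) l).const_mul_left (g * (α ^ 2 + β ^ 2))
    have t3 := hseO.const_mul_left (g * β)
    have t4 := he2O.const_mul_left (g / 4)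
    have t5 : (fun s : ℝ => (u * s ^ 2 + s * e s) * S s) =O[l] (fun s : ℝ => s ^ 2) :=
      ((((isBigO_refl (fun s : ℝ => s ^ 2) l).const_mul_left u).add hseO).mul hSO).congr
        (fun s => rfl) (fun s => by ring)
    exact ((((t1.sub t2).sub t3).sub t4).add t5)
  have hWinvO : (fun s : ℝ => (W s)⁻¹) =O[l] (fun _ : ℝ => (1:ℝ)) :=
    (hWtend.inv₀ (ne_of_gt hgpos)).isBigO_one ℝ
  have hNO : N =O[l] (fun s : ℝ => s ^ 2) := by
    refine IsBigO.congr' (hUO.mul hWinvO) ?_ ?_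
    · filter_upwards [hNU] with s hs
      rw [div_eq_mul_inv] at hs
      exact hs.symm
    · filter_upwards with s
      ring
  have hNtend : Tendsto N l (𝓝 0) := hNO.trans_tendsto ht2
  have hrtendN : Tendsto r l (𝓝 (cT ^ 2)) := by
    have hrN : ∀ s, r s = N s + (cT - α * s) ^ 2 := by
      intro s; rw [hNdef]; simp only; ring
    have h := hNtend.add hq2tend
    rw [zero_add] at h
    exact h.congr fun s => (hrN s).symm
  have hrpos : ∀ᶠ s in l, cT ^ 2 / 2 < r s :=
    hrtendN.eventually_const_lt (by nlinarith [pow_pos hcT0 2])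
  -- the root branch
  obtain ⟨ξp, hξdef⟩ : ∃ x : ℝ → ℂ, x = fun s =>
    ((Real.sqrt (r s) : ℝ) : ℂ) + ((σ s / 2 : ℝ) : ℂ) * Complex.I := ⟨_, rfl⟩
  have hre : ∀ s, (ξp s).re = Real.sqrt (r s) := by
    intro s; rw [hξdef]; simp
  have him : ∀ s, (ξp s).im = σ s / 2 := by
    intro s; rw [hξdef]; simp
  -- sqrt convergence
  have hsqrt_tend : Tendsto (fun s => Real.sqrt (r s)) l (𝓝 cT) := by
    have h := (Real.continuous_sqrt.continuousAt (x := cT ^ 2)).tendsto.comp hrtendN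
    rwa [Real.sqrt_sq hcT0.le] at h
  have hdtend : Tendsto (fun s => Real.sqrt (r s) + (cT - α * s)) l (𝓝 (2 * cT)) := by
    have h := hsqrt_tend.add hq1tend
    rwa [show cT + cT = 2 * cT by ring] at h
  have hdpos : ∀ᶠ s in l, cT < Real.sqrt (r s) + (cT - α * s) :=
    hdtend.eventually_const_lt (by linarith)
  -- Re big-O
  have hReO : (fun s => (ξp s).re - (cT - α * s)) =O[l] (fun s : ℝ => s ^ 2) := by
    have key : (fun s => Real.sqrt (r s) - (cT - α * s)) =O[l] N := by
      rw [isBigO_iff]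
      refine ⟨1 / cT, ?_⟩
      filter_upwards [hrpos, hdpos] with s hr' hd
      have hrnn : (0:ℝ) ≤ r s := le_trans (by positivity) hr'.le
      have hdp : (0:ℝ) < Real.sqrt (r s) + (cT - α * s) := lt_trans hcT0 hd
      have hid : (Real.sqrt (r s) - (cT - α * s)) * (Real.sqrt (r s) + (cT - α * s)) = N s := by
        rw [hNdef]; simp only
        linear_combination Real.sq_sqrt hrnn
      have heq : Real.sqrt (r s) - (cT - α * s) = N s / (Real.sqrt (r s) + (cT - α * s)) :=
        eq_div_of_mul_eq (ne_of_gt hdp) hid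
      rw [heq, Real.norm_eq_abs, Real.norm_eq_abs, abs_div,
        _root_.abs_of_pos hdp]
      calc |N s| / (Real.sqrt (r s) + (cT - α * s)) ≤ |N s| / cT :=
            div_le_div_of_nonneg_left (abs_nonneg _) hcT0 hd.le
        _ = 1 / cT * |N s| := by ring
    exact ((key.trans hNO).congr (fun s => by rw [hre s]) (fun s => rfl))
  -- Im big-O
  have hImO : (fun s => (ξp s).im - (-m - β * s)) =O[l] (fun s : ℝ => s ^ 2) := by
    rw [isBigO_iff]
    refine ⟨M / 2, ?_⟩
    filter_upwards [hσe, hee] with s hσe' he'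
    have hident : (ξp s).im - (-m - β * s) = -(e s) / 2 := by
      rw [him s, hσe', hudef]; ring
    rw [hident, Real.norm_eq_abs, Real.norm_eq_abs, abs_div, abs_neg]
    rw [_root_.abs_of_nonneg (sq_nonneg s), _root_.abs_two]
    calc |e s| / 2 ≤ M * s ^ 2 / 2 := by linarith [he']
      _ = M / 2 * s ^ 2 := by ring
  -- the root property
  have hroot : ∀ᶠ s in l,
      (ξp s) ^ 3 + 2 * I * (m : ℂ) * (1 + 3 * (γ : ℂ) / (4 * (s : ℂ))) * (ξp s) ^ 2
        - ((c : ℂ) ^ 2 + (3 * (γ : ℂ) / (s : ℂ)) * (m : ℂ) ^ 2) * (ξp s)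
        - (3 * I * (m : ℂ) * (c : ℂ) ^ 2) / (2 * (s : ℂ)) = 0 := by
    filter_upwards [hev_pos, hy0ev, hy0neg, hrpos] with s hs hQy hy0n hr'
    obtain ⟨hQ0, -⟩ := hQy
    have hsne : s ≠ 0 := hs.ne'
    have hy0ne : y0 s ≠ 0 := ne_of_lt hy0n
    have hrnn : (0:ℝ) ≤ r s := le_trans (by positivity) hr'.le
    -- cleared real relations
    have hQpoly : 2 * s * (y0 s) ^ 3 + (4 * m * s + 3 * γ * m) * (y0 s) ^ 2
        + (2 * c ^ 2 * s + 6 * γ * m ^ 2) * (y0 s) + 3 * m * c ^ 2 = 0 := by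
      have hkey : 2 * s * (y0 s) ^ 3 + (4 * m * s + 3 * γ * m) * (y0 s) ^ 2
          + (2 * c ^ 2 * s + 6 * γ * m ^ 2) * (y0 s) + 3 * m * c ^ 2
          = 2 * s * (Q s (y0 s)) := by
        rw [hQdef]; simp only; field_simp; ring
      rw [hkey, hQ0, mul_zero]
    have hσpoly : 2 * s * (σ s) = -(4 * m * s + 3 * γ * m) - 2 * s * (y0 s) := by
      rw [hσdef]; simp only; field_simp; ring
    have hppoly : (p s) * (y0 s) * (2 * s) = 3 * m * c ^ 2 := by
      rw [hpdef]; simp only; field_simp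
    have hrpoly : (Real.sqrt (r s)) ^ 2 = -(σ s) ^ 2 / 4 - p s := by
      rw [Real.sq_sqrt hrnn, hrdef]
    -- complex casts
    have hsc : (s : ℂ) ≠ 0 := Complex.ofReal_ne_zero.2 hsne
    have hy0c : ((y0 s : ℝ) : ℂ) ≠ 0 := Complex.ofReal_ne_zero.2 hy0ne
    have hQc := congrArg (Complex.ofReal) hQpoly
    push_cast at hQc
    have hσc := congrArg (Complex.ofReal) hσpoly
    push_cast at hσc
    have hpc := congrArg (Complex.ofReal) hppoly
    push_cast at hpc
    have hR2c := congrArg (Complex.ofReal) hrpoly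
    push_cast at hR2c
    have hξs : ξp s = ((Real.sqrt (r s) : ℝ) : ℂ) + ((σ s / 2 : ℝ) : ℂ) * Complex.I := by
      rw [hξdef]
    -- quadratic equation
    have hquad : (ξp s) ^ 2 - I * ((σ s : ℝ) : ℂ) * (ξp s) + ((p s : ℝ) : ℂ) = 0 := by
      rw [hξs]; push_cast
      linear_combination hR2c + (-(((σ s : ℝ) : ℂ)) ^ 2 / 4) * Complex.I_sq
    -- cleared cubic vanishes
    have hbig : ((y0 s : ℝ) : ℂ) * (4 * (s:ℂ) * (ξp s) ^ 3
        + (8 * (m:ℂ) * (s:ℂ) + 6 * (γ:ℂ) * (m:ℂ)) * I * (ξp s) ^ 2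
        - (4 * (c:ℂ) ^ 2 * (s:ℂ) + 12 * (γ:ℂ) * (m:ℂ) ^ 2) * (ξp s)
        - 6 * I * (m:ℂ) * (c:ℂ) ^ 2) = 0 := by
      linear_combination (4 * (s:ℂ) * ((y0 s : ℝ):ℂ) * (ξp s - I * ((y0 s : ℝ):ℂ))) * hquad
        + (2 * I * (ξp s) ^ 2 * ((y0 s : ℝ):ℂ) + 2 * ((y0 s : ℝ):ℂ) ^ 2 * (ξp s)) * hσc
        + (-2 * (ξp s)) * hQc
        + (2 * I * ((y0 s : ℝ):ℂ) - 2 * (ξp s)) * hpc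
        + (-4 * (s:ℂ) * ((σ s : ℝ):ℂ) * ((y0 s : ℝ):ℂ) ^ 2 * (ξp s)) * Complex.I_sq
    have hCP : 4 * (s:ℂ) * (ξp s) ^ 3
        + (8 * (m:ℂ) * (s:ℂ) + 6 * (γ:ℂ) * (m:ℂ)) * I * (ξp s) ^ 2
        - (4 * (c:ℂ) ^ 2 * (s:ℂ) + 12 * (γ:ℂ) * (m:ℂ) ^ 2) * (ξp s)
        - 6 * I * (m:ℂ) * (c:ℂ) ^ 2 = 0 :=
      (mul_eq_zero.1 hbig).resolve_left hy0c
    have h4s : (4 * (s:ℂ)) ≠ 0 := by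
      intro h
      exact hsc (by
        have := mul_eq_zero.1 h
        rcases this with h' | h'
        · norm_num at h'
        · exact h')
    have hGid : (4 * (s:ℂ)) * ((ξp s) ^ 3
        + 2 * I * (m : ℂ) * (1 + 3 * (γ : ℂ) / (4 * (s : ℂ))) * (ξp s) ^ 2
        - ((c : ℂ) ^ 2 + (3 * (γ : ℂ) / (s : ℂ)) * (m : ℂ) ^ 2) * (ξp s)
        - (3 * I * (m : ℂ) * (c : ℂ) ^ 2) / (2 * (s : ℂ)))
        = 4 * (s:ℂ) * (ξp s) ^ 3
        + (8 * (m:ℂ) * (s:ℂ) + 6 * (γ:ℂ) * (m:ℂ)) * I * (ξp s) ^ 2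
        - (4 * (c:ℂ) ^ 2 * (s:ℂ) + 12 * (γ:ℂ) * (m:ℂ) ^ 2) * (ξp s)
        - 6 * I * (m:ℂ) * (c:ℂ) ^ 2 := by
      field_simp
      ring
    have hfin := hGid.trans hCP
    exact (mul_eq_zero.1 hfin).resolve_left h4s
  -- extract ε
  rw [hldef, eventually_iff] at hroot
  obtain ⟨ε, hε, hsub⟩ := mem_nhdsGT_iff_exists_Ioo_subset.1 hroot
  refine ⟨ε, hε, ξp, fun s hsm => hsub hsm, ?_, ?_⟩
  · rw [← hαdef, ← hldef]; exact hReO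
  · rw [← hβdef, ← hldef]; exact hImO


/-- Assume 0 < k a₁ < c/√γ. There exist ε > 0 and a root branch ξ⁺ of
P_Pr on (0, ε) with, as Pr → 0⁺,
Re ξ⁺(Pr) = c_T(k) − ((γ−1)c²/(3γ²c_T(k)))·Pr + O(Pr²) and
Im ξ⁺(Pr) = −k a₁ − ((γ−1)c²/(3γ² k a₁))·Pr + O(Pr²). -/
theorem stmt_17 (ρ μ c k γ : ℝ) (hρ : 0 < ρ) (hμ : 0 < μ) (hc : 0 < c) (hk : 0 < k)
    (hγ : 1 < γ) (a₁ : ℝ) (ha₁ : a₁ = 2 * μ / (3 * ρ))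
    (hka : 0 < k * a₁) (hlt : k * a₁ < c / Real.sqrt γ)
    (cT : ℝ) (hcT : cT = Real.sqrt (c ^ 2 / γ - k ^ 2 * a₁ ^ 2)) :
    ∃ ε : ℝ, 0 < ε ∧ ∃ ξp : ℝ → ℂ,
      (∀ Pr : ℝ, Pr ∈ Set.Ioo 0 ε → P k a₁ c γ Pr (ξp Pr) = 0)
      ∧ (fun Pr : ℝ => (ξp Pr).re - (cT - ((γ - 1) * c ^ 2 / (3 * γ ^ 2 * cT)) * Pr))
          =O[nhdsWithin 0 (Set.Ioi 0)] (fun Pr : ℝ => Pr ^ 2)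
      ∧ (fun Pr : ℝ =>
            (ξp Pr).im - (-(k * a₁) - ((γ - 1) * c ^ 2 / (3 * γ ^ 2 * (k * a₁))) * Pr))
          =O[nhdsWithin 0 (Set.Ioi 0)] (fun Pr : ℝ => Pr ^ 2) := by
  have hγ0 : (0:ℝ) < γ := lt_trans one_pos hγ
  have hsγ : 0 < Real.sqrt γ := Real.sqrt_pos.2 hγ0
  have h2 : (k * a₁) ^ 2 < (c / Real.sqrt γ) ^ 2 := by
    have := mul_self_lt_mul_self hka.le hlt
    nlinarith [this]
  have h3 : (c / Real.sqrt γ) ^ 2 = c ^ 2 / γ := by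
    rw [div_pow, Real.sq_sqrt hγ0.le]
  have h1 : 0 < c ^ 2 / γ - k ^ 2 * a₁ ^ 2 := by nlinarith [h2, h3]
  have hcT0 : 0 < cT := by rw [hcT]; exact Real.sqrt_pos.2 h1
  have hcT2 : cT ^ 2 = c ^ 2 / γ - (k * a₁) ^ 2 := by
    rw [hcT, Real.sq_sqrt h1.le]; ring
  obtain ⟨ε, hε, ξp, hroot, hRe, hIm⟩ := aux17 c γ (k * a₁) cT hc hγ hka hcT0 hcT2
  refine ⟨ε, hε, ξp, ?_, hRe, hIm⟩
  intro Pr hPr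
  have h := hroot Pr hPr
  have hcast : P k a₁ c γ Pr (ξp Pr) =
      (ξp Pr) ^ 3 + 2 * I * ((k * a₁ : ℝ) : ℂ) * (1 + 3 * (γ : ℂ) / (4 * (Pr : ℂ))) * (ξp Pr) ^ 2
        - ((c : ℂ) ^ 2 + (3 * (γ : ℂ) / (Pr : ℂ)) * ((k * a₁ : ℝ) : ℂ) ^ 2) * (ξp Pr)
        - (3 * I * ((k * a₁ : ℝ) : ℂ) * (c : ℂ) ^ 2) / (2 * (Pr : ℂ)) := by
    simp only [P]; push_cast; ring
  rw [hcast, h]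
end
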